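/- arXiv:1205.1123 — 6 statements merged into one kernel-verified Lean document; each statement's English description precedes it below -/
import Mathlib

section
/- Let H be a finite tree with m edges on vertex set {0,1,...,m}, with each edge given an arbitrary direction and a nonzero real connection coefficient φ_{ij} (with φ_{ji} = φ_{ij}^{-1}). In R^{m+1} with orthonormal basis (u_i), define for each directed edge (i,j) the vectors α_{ij} = u_i − φ_{ij} u_j and e_{ij} = u_i − φ_{ji} u_j. Then the determinant of the m×m matrix Q_H whose (s,t)-entry is the inner product ⟨α_s, e_t⟩ (s, t ranging over the edges of H) equals m+1, independently of the connection coefficients φ. -/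
/-!
On a tree every connection is a gauge transform of the trivial one: transporting `φ` from a
root along the unique paths gives a nowhere-zero `w` with `w j = φ i j * w i` on every edge.
With `N` the signed incidence matrix (rows `u_i - u_j`), this gives `α = D N W` and
`e = D⁻¹ N W⁻¹` for diagonal `D`, `W`, hence `Q = D (N Nᵀ) D⁻¹` and `det Q = det (N Nᵀ)`.
The rows of `N` sum to zero, so `N Nᵀ = N' (1 + J) N'ᵀ`, where `N'` drops the column of the
vertex `0` and `J` is the all-ones matrix; `det (1 + J) = m + 1`, and `N'` is unimodular
because in a connected graph each `u_k - u_0` is an integral combination of the rows of `N`.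
-/

open Matrix

namespace SimpleGraph

variable {V : Type*} {G : SimpleGraph V}

theorem IsAcyclic.path_eq_concat_or {r a b : V} (hG : G.IsAcyclic) (p : G.Path r a)
    (q : G.Path r b) (hab : G.Adj a b) :
    (q : G.Walk r b) = (p : G.Walk r a).concat hab ∨
      (p : G.Walk r a) = (q : G.Walk r b).concat hab.symm := by
  classical
  by_cases hb : b ∈ (p : G.Walk r a).support
  · right
    obtain rfl : q = ⟨_, p.2.takeUntil hb⟩ := (hG.subsingleton_path _ _).elim _ _
    have ha := Walk.endpoint_notMem_support_takeUntil p.2 hb hab.ne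
    exact congrArg Subtype.val
      ((hG.subsingleton_path _ _).elim p ⟨_, (p.2.takeUntil hb).concat ha hab.symm⟩)
  · left
    exact congrArg Subtype.val ((hG.subsingleton_path _ _).elim q ⟨_, p.2.concat hb hab⟩)

variable {K : Type*} [Field K]

def Walk.transport (φ : V → V → K) {x y : V} (p : G.Walk x y) : K :=
  (p.darts.map fun d => φ d.fst d.snd).prod

theorem Walk.transport_concat (φ : V → V → K) {x y z : V} (p : G.Walk x y) (h : G.Adj y z) :
    (p.concat h).transport φ = p.transport φ * φ y z := by
  simp [transport, Walk.darts_concat]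

theorem Walk.transport_ne_zero {φ : V → V → K} (hφ : ∀ a b, G.Adj a b → φ a b ≠ 0)
    {x y : V} (p : G.Walk x y) : p.transport φ ≠ 0 :=
  List.prod_ne_zero fun h => by
    obtain ⟨d, -, hd⟩ := List.mem_map.1 h
    exact hφ _ _ d.adj hd

theorem IsTree.exists_gauge (hG : G.IsTree) {φ : V → V → K}
    (hφ : ∀ a b, G.Adj a b → φ a b * φ b a = 1) :
    ∃ w : V → K, (∀ v, w v ≠ 0) ∧ ∀ a b, G.Adj a b → w b = φ a b * w a := by
  classical
  obtain ⟨r⟩ := hG.connected.nonempty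
  let path (v : V) : G.Path r v := (hG.connected r v).some.toPath
  refine ⟨fun v => (path v : G.Walk r v).transport φ,
    fun v => Walk.transport_ne_zero (fun a b h => left_ne_zero_of_mul_eq_one (hφ a b h)) _,
    fun a b hab => ?_⟩
  rcases hG.isAcyclic.path_eq_concat_or (path a) (path b) hab with h | h
  · simp only [h, Walk.transport_concat, mul_comm]
  · simp only [h, Walk.transport_concat]
    linear_combination (-(path b : G.Walk r b).transport φ) * hφ a b hab

end SimpleGraph

open SimpleGraph

section Incidence

variable {ι V : Type*}

def edgeGraph (E : ι → V × V) : SimpleGraph V :=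
  SimpleGraph.fromRel fun a b => ∃ t, E t = (a, b) ∨ E t = (b, a)

theorem edgeGraph_adj {E : ι → V × V} {a b : V} :
    (edgeGraph E).Adj a b ↔ a ≠ b ∧ ∃ t, E t = (a, b) ∨ E t = (b, a) := by
  simp only [edgeGraph, fromRel_adj, or_comm (a := E _ = (b, a)), or_self]

theorem edgeGraph_adj_of_ne {E : ι → V × V} {t : ι} (ht : (E t).1 ≠ (E t).2) :
    (edgeGraph E).Adj (E t).1 (E t).2 :=
  edgeGraph_adj.2 ⟨ht, t, .inl rfl⟩

variable [DecidableEq V]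

def incidenceMatrix (R : Type*) [Ring R] (E : ι → V × V) : Matrix ι V R :=
  Matrix.of fun t => Pi.single (E t).1 1 - Pi.single (E t).2 1

variable (R : Type*) [Ring R] (E : ι → V × V)

theorem incidenceMatrix_map :
    (incidenceMatrix ℤ E).map (Int.cast : ℤ → R) = incidenceMatrix R E := by
  ext t v
  simp [incidenceMatrix, Pi.single_apply, apply_ite (Int.cast : ℤ → R)]

theorem incidenceMatrix_mulVec_one [Fintype V] : incidenceMatrix R E *ᵥ 1 = 0 := by
  ext t
  simp [incidenceMatrix, mulVec, dotProduct, Finset.sum_sub_distrib]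

variable {R E}

theorem exists_vecMul_incidenceMatrix_of_reachable [Fintype ι] [DecidableEq ι] {x y : V}
    (h : (edgeGraph E).Reachable x y) :
    ∃ c : ι → R, c ᵥ* incidenceMatrix R E = Pi.single y 1 - Pi.single x 1 := by
  obtain ⟨p⟩ := h
  induction p with
  | nil => exact ⟨0, by simp⟩
  | @cons a b y hab p ih =>
    obtain ⟨c, hc⟩ := ih
    obtain ⟨-, t, ht | ht⟩ := edgeGraph_adj.1 hab
    · refine ⟨c - Pi.single t 1, ?_⟩
      rw [sub_vecMul, hc, single_one_vecMul]
      simp [incidenceMatrix, ht]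
    · refine ⟨c + Pi.single t 1, ?_⟩
      rw [add_vecMul, hc, single_one_vecMul]
      simp [incidenceMatrix, ht]

theorem isUnit_det_incidenceMatrix_submatrix_succ {m : ℕ}
    {E : Fin m → Fin (m + 1) × Fin (m + 1)} (hE : (edgeGraph E).Connected) :
    IsUnit ((incidenceMatrix ℤ E).submatrix id Fin.succ).det := by
  choose c hc using fun k : Fin m =>
    exists_vecMul_incidenceMatrix_of_reachable (R := ℤ) (hE 0 k.succ)
  refine isUnit_det_of_left_inverse (B := Matrix.of c) ?_
  ext k j
  have hkj := congrFun (hc k) j.succ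
  simp only [vecMul, dotProduct] at hkj
  simp [mul_apply, hkj, Pi.single_apply, one_apply, Fin.succ_ne_zero, eq_comm]

theorem sq_det_incidenceMatrix_submatrix_succ {R : Type*} [CommRing R] {m : ℕ}
    {E : Fin m → Fin (m + 1) × Fin (m + 1)} (hE : (edgeGraph E).Connected) :
    ((incidenceMatrix R E).submatrix id Fin.succ).det ^ 2 = 1 := by
  rw [← incidenceMatrix_map, submatrix_map, ← Int.cast_det, ← Int.cast_pow,
    Int.isUnit_sq (isUnit_det_incidenceMatrix_submatrix_succ hE), Int.cast_one]

end Incidence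

section RowSumZero

variable {ι R : Type*} [CommRing R] {n : ℕ}

theorem mul_transpose_eq_of_mulVec_one_eq_zero (N : Matrix ι (Fin (n + 1)) R)
    (hN : N *ᵥ 1 = 0) :
    N * Nᵀ = N.submatrix id Fin.succ * (1 + vecMulVec 1 1 : Matrix (Fin n) (Fin n) R) *
      (N.submatrix id Fin.succ)ᵀ := by
  set N' := N.submatrix id Fin.succ
  have hcol (s : ι) : N s 0 = -(N' *ᵥ 1) s := by
    have := congrFun hN s
    simp only [mulVec, dotProduct, Fin.sum_univ_succ, Pi.one_apply, mul_one,
      Pi.zero_apply] at this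
    simp only [N', mulVec, dotProduct, submatrix_apply, id, Pi.one_apply, mul_one]
    linear_combination this
  rw [Matrix.mul_add, Matrix.mul_one, Matrix.add_mul, mul_vecMulVec, vecMulVec_mul,
    vecMul_transpose]
  ext s t
  simp [mul_apply, Fin.sum_univ_succ, hcol, vecMulVec_apply, N', add_comm]

theorem det_mul_transpose_of_mulVec_one_eq_zero (N : Matrix (Fin n) (Fin (n + 1)) R)
    (hN : N *ᵥ 1 = 0) :
    (N * Nᵀ).det = (N.submatrix id Fin.succ).det ^ 2 * (n + 1) := by
  rw [mul_transpose_eq_of_mulVec_one_eq_zero N hN, det_mul, det_mul, det_transpose,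
    vecMulVec_eq Unit, det_one_add_replicateCol_mul_replicateRow]
  simp only [dotProduct_one, Pi.one_apply, Finset.sum_const, Finset.card_univ,
    Fintype.card_fin, nsmul_eq_mul, mul_one]
  ring

end RowSumZero

section Gauge

variable {ι V K : Type*} [Fintype ι] [DecidableEq ι] [Fintype V] [DecidableEq V] [Field K]

theorem of_single_sub_smul_single_eq_diagonal_mul_incidenceMatrix (E : ι → V × V)
    (hE : ∀ t, (E t).1 ≠ (E t).2) (c : ι → K) (w : V → K) (hw : ∀ v, w v ≠ 0)
    (hc : ∀ t, w (E t).2 = c t * w (E t).1) :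
    Matrix.of (fun t => Pi.single (E t).1 1 - c t • Pi.single (E t).2 1) =
      diagonal (fun t => (w (E t).1)⁻¹) * incidenceMatrix K E * diagonal w := by
  ext t v
  simp only [of_apply, diagonal_mul, mul_diagonal, incidenceMatrix, Pi.sub_apply,
    Pi.smul_apply, Pi.single_apply, smul_eq_mul]
  by_cases h1 : v = (E t).1
  · subst h1
    simp [hE t, hw]
  by_cases h2 : v = (E t).2
  · subst h2
    simp only [h1, ↓reduceIte, mul_one, zero_sub, mul_neg, hc, neg_mul, neg_inj]
    field_simp [hw]
  · simp [h1, h2]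

theorem det_diagonal_mul_mul_transpose (N : Matrix ι V K) (a : ι → K) (w : V → K)
    (ha : ∀ t, a t ≠ 0) (hw : ∀ v, w v ≠ 0) :
    ((diagonal a * N * diagonal w) * (diagonal a⁻¹ * N * diagonal w⁻¹)ᵀ).det =
      (N * Nᵀ).det := by
  have hww : diagonal w * diagonal w⁻¹ = 1 := by
    rw [diagonal_mul_diagonal, ← diagonal_one]
    exact congrArg diagonal (funext fun v => mul_inv_cancel₀ (hw v))
  have haa : (∏ t, a t) * ∏ t, a⁻¹ t = 1 := by
    rw [← Finset.prod_mul_distrib]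
    exact Finset.prod_eq_one fun t _ => mul_inv_cancel₀ (ha t)
  have : (diagonal a * N * diagonal w) * (diagonal a⁻¹ * N * diagonal w⁻¹)ᵀ =
      diagonal a * (N * Nᵀ) * diagonal a⁻¹ := by
    simp only [transpose_mul, diagonal_transpose, Matrix.mul_assoc]
    rw [← Matrix.mul_assoc (diagonal w), hww, Matrix.one_mul]
  rw [this, det_mul, det_mul, det_diagonal, det_diagonal]
  linear_combination (N * Nᵀ).det * haa

end Gauge

theorem det_Q_tree_general (m : ℕ) (E : Fin m → Fin (m + 1) × Fin (m + 1))
    (φ : Fin (m + 1) → Fin (m + 1) → ℝ)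
    (hφnz : ∀ i j, φ i j ≠ 0)
    (hφinv : ∀ i j, φ j i = (φ i j)⁻¹)
    (hloop : ∀ t, (E t).1 ≠ (E t).2)
    (htree : (SimpleGraph.fromRel fun a b => ∃ t, E t = (a, b) ∨ E t = (b, a)).IsTree)
    (α e : Fin m → (Fin (m + 1) → ℝ))
    (hα : ∀ t, α t = (Pi.single (E t).1 1 : Fin (m + 1) → ℝ) - φ (E t).1 (E t).2 • (Pi.single (E t).2 1 : Fin (m + 1) → ℝ))
    (he : ∀ t, e t = (Pi.single (E t).1 1 : Fin (m + 1) → ℝ) - φ (E t).2 (E t).1 • (Pi.single (E t).2 1 : Fin (m + 1) → ℝ)) :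
    (Matrix.of fun s t => α s ⬝ᵥ e t).det = (m + 1 : ℝ) := by
  have hT : (edgeGraph E).IsTree := htree
  obtain ⟨w, hw, hwφ⟩ := hT.exists_gauge (φ := φ) fun a b _ => by
    rw [hφinv a b, mul_inv_cancel₀ (hφnz a b)]
  set N := incidenceMatrix ℝ E
  have hA : Matrix.of α = diagonal (fun t => (w (E t).1)⁻¹) * N * diagonal w :=
    (congrArg Matrix.of (funext hα)).trans <|
      of_single_sub_smul_single_eq_diagonal_mul_incidenceMatrix E hloop _ w hw fun t =>
        hwφ _ _ (edgeGraph_adj_of_ne (hloop t))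
  have hE : Matrix.of e = diagonal (fun t => (w (E t).1)⁻¹)⁻¹ * N * diagonal w⁻¹ := by
    refine (congrArg Matrix.of (funext he)).trans <|
      of_single_sub_smul_single_eq_diagonal_mul_incidenceMatrix E hloop _ w⁻¹
        (fun v => inv_ne_zero (hw v)) fun t => ?_
    rw [Pi.inv_apply, Pi.inv_apply, hwφ _ _ (edgeGraph_adj_of_ne (hloop t)).symm]
    field_simp [hw, hφnz]
  calc (Matrix.of fun s t => α s ⬝ᵥ e t).det = (Matrix.of α * (Matrix.of e)ᵀ).det := rfl
    _ = (N * Nᵀ).det := by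
      rw [hA, hE]
      exact det_diagonal_mul_mul_transpose _ _ _ (fun t => inv_ne_zero (hw _)) hw
    _ = m + 1 := by
      rw [det_mul_transpose_of_mulVec_one_eq_zero _ (incidenceMatrix_mulVec_one ℝ E),
        sq_det_incidenceMatrix_submatrix_succ hT.connected, one_mul]

/-- For a tree `H` with `m` edges on vertex set `{0,...,m}`, with arbitrary
edge directions and a connection `φ` (nonzero, `φ j i = (φ i j)⁻¹`), the determinant of the
matrix `Q_H = (⟨α_s, e_t⟩)` over pairs of edges equals `m + 1`. -/
theorem det_Q_tree (m : ℕ) (E : Fin m → Fin (m + 1) × Fin (m + 1))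
    (φ : Fin (m + 1) → Fin (m + 1) → ℝ)
    (hφnz : ∀ i j, φ i j ≠ 0)
    (hφinv : ∀ i j, φ j i = (φ i j)⁻¹)
    (hloop : ∀ t, (E t).1 ≠ (E t).2)
    (hinj : ∀ s t : Fin m, Sym2.mk (E s) = Sym2.mk (E t) → s = t)
    (htree : (SimpleGraph.fromRel fun a b => ∃ t, E t = (a, b) ∨ E t = (b, a)).IsTree)
    (α e : Fin m → (Fin (m + 1) → ℝ))
    (hα : ∀ t, α t = (Pi.single (E t).1 1 : Fin (m + 1) → ℝ) - φ (E t).1 (E t).2 • (Pi.single (E t).2 1 : Fin (m + 1) → ℝ))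
    (he : ∀ t, e t = (Pi.single (E t).1 1 : Fin (m + 1) → ℝ) - φ (E t).2 (E t).1 • (Pi.single (E t).2 1 : Fin (m + 1) → ℝ)) :
    (Matrix.of fun s t => α s ⬝ᵥ e t).det = (m + 1 : ℝ) :=
  det_Q_tree_general m E φ hφnz hφinv hloop htree α e hα he
end

section
/- Let H be a rooted tree with edges directed away from the root, each edge (i,j) carrying a nonzero real coefficient φ_{ij}. In R^n with orthonormal basis (u_i) define α_{ij} = u_i − φ_{ij} u_j for each edge, and let P_H = G(A_H, A_H) be the Gram matrix of the vectors α_{ij} over all edges. Then det P_H = ∏_{edges (i,j)} φ_{ij}^2 · ∑_{v vertex} φ_{Λ(v)}^{-2}, where Λ(v) is the unique directed path from the root to v and φ_{Λ(v)} is the product of φ over the edges of Λ(v), with φ_{Λ(root)} = 1 for the empty path. -/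
open Matrix

open Finset in

lemma det_eq_prod_diag {N : Type*} [Fintype N] [DecidableEq N] (M : Matrix N N ℝ) (f : N → ℕ)
    (h : ∀ i j, i ≠ j → f j ≤ f i → M i j = 0) : M.det = ∏ i, M i i := by
  have hbt : M.BlockTriangular f := fun i j hij =>
    h i j (fun he => absurd (he ▸ hij) (lt_irrefl _)) hij.le
  rw [hbt.det]
  have hblock : ∀ a, (M.toSquareBlock f a).det = ∏ i : {i // f i = a}, M i i := by
    intro a
    have : M.toSquareBlock f a = Matrix.diagonal (fun i : {i // f i = a} => M i i) := by
      ext i j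
      by_cases hij : i = j
      · subst hij; simp [Matrix.toSquareBlock_def]
      · have hne : (i : N) ≠ (j : N) := fun hc => hij (Subtype.ext hc)
        rw [Matrix.toSquareBlock_def]
        simp only [Matrix.diagonal, of_apply, hij, if_neg hij]
        exact h i j hne (le_of_eq (j.2.trans i.2.symm))
    rw [this, Matrix.det_diagonal]
  calc ∏ a ∈ univ.image f, (M.toSquareBlock f a).det
      = ∏ a ∈ univ.image f, ∏ i ∈ univ.filter (fun i => f i = a), M i i := by
        refine Finset.prod_congr rfl fun a _ => ?_
        rw [hblock a,
          Finset.prod_subtype (p := fun i => f i = a) (univ.filter (fun i => f i = a))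
            (by simp) (fun i => M i i)]
    _ = ∏ i, M i i :=
        Finset.prod_fiberwise_of_maps_to (fun i _ => Finset.mem_image_of_mem f (mem_univ i)) _
open Matrix Finset

/-- For a rooted tree on `Fin n` (given by a parent function `par` with a depth
function certifying acyclicity) whose edges are directed away from the root `r` and carry
nonzero coefficients `φ v = φ_{par v, v}`, with `Φ v` the product of `φ` along the path from
the root to `v`, the Gram determinant of the vectors `α_v = u_{par v} - φ v • u_v` (over all
non-root vertices `v`, i.e. all edges) equals
`(∏_{edges} φ^2) * (∑_{vertices v} (Φ v)⁻²)`. -/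
theorem det_P_rooted_tree (n : ℕ) (r : Fin n) (par : Fin n → Fin n) (dep : Fin n → ℕ)
    (hroot : par r = r) (hdep : ∀ v, v ≠ r → dep v = dep (par v) + 1)
    (φ : Fin n → ℝ) (hφnz : ∀ v, φ v ≠ 0)
    (Φ : Fin n → ℝ) (hΦr : Φ r = 1) (hΦ : ∀ v, v ≠ r → Φ v = Φ (par v) * φ v)
    (α : {v : Fin n // v ≠ r} → (Fin n → ℝ))
    (hα : ∀ v, α v = (Pi.single (par v.1) 1 : Fin n → ℝ)
      - φ v.1 • (Pi.single v.1 1 : Fin n → ℝ)) :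
    (Matrix.of fun v w : {v : Fin n // v ≠ r} => α v ⬝ᵥ α w).det
      = (∏ v : {v : Fin n // v ≠ r}, (φ v.1) ^ 2) * ∑ v : Fin n, ((Φ v)⁻¹) ^ 2 := by
  classical
  -- ancestor relation
  set anc : Fin n → Fin n → Prop := fun i j => ∃ k, par^[k] j = i with hanc_def
  have hanc_refl : ∀ i, anc i i := fun i => ⟨0, rfl⟩
  have hiter_r : ∀ k, par^[k] r = r := fun k => Function.iterate_fixed hroot k
  -- ancestors have smaller depth
  have hanc_dep : ∀ i j, anc i j → i = j ∨ dep i < dep j := by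
    rintro i j ⟨k, hk⟩
    induction k generalizing j with
    | zero => exact Or.inl hk.symm
    | succ k ih =>
      rw [Function.iterate_succ_apply] at hk
      by_cases hj : j = r
      · subst hj; rw [hroot, hiter_r] at hk; exact Or.inl hk.symm
      · rcases ih (par j) hk with h | h
        · exact Or.inr (by rw [hdep j hj, h]; omega)
        · exact Or.inr (by rw [hdep j hj]; omega)
  have hanc_step : ∀ (v : Fin n), v ≠ r → ∀ i, anc i v ↔ i = v ∨ anc i (par v) := by
    intro v hv i
    constructor
    · rintro ⟨k, hk⟩
      cases k with
      | zero => exact Or.inl hk.symm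
      | succ k => exact Or.inr ⟨k, by rwa [Function.iterate_succ_apply] at hk⟩
    · rintro (rfl | ⟨k, hk⟩)
      · exact hanc_refl i
      · exact ⟨k + 1, by rwa [Function.iterate_succ_apply]⟩
  have hnotanc : ∀ (v : Fin n), v ≠ r → ¬ anc v (par v) := by
    intro v hv h
    rcases hanc_dep v (par v) h with h' | h'
    · have := hdep v hv; rw [← h'] at this; omega
    · have := hdep v hv; omega
  -- nonvanishing of Φ
  have hΦnz : ∀ v, Φ v ≠ 0 := by
    have : ∀ m v, dep v ≤ m → Φ v ≠ 0 := by
      intro m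
      induction m with
      | zero =>
        intro v hv
        by_cases h : v = r
        · rw [h, hΦr]; norm_num
        · rw [hdep v h] at hv; omega
      | succ m ih =>
        intro v hv
        by_cases h : v = r
        · rw [h, hΦr]; norm_num
        · rw [hΦ v h]
          have hd := hdep v h
          exact mul_ne_zero (ih (par v) (by omega)) (hφnz v)
    exact fun v => this (dep v) v le_rfl
  -- root is ancestor of everyone
  have hanc_r : ∀ j, anc r j := by
    have : ∀ m j, dep j ≤ m → anc r j := by
      intro m
      induction m with
      | zero =>
        intro j hj
        by_cases h : j = r
        · exact h ▸ hanc_refl j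
        · rw [hdep j h] at hj; omega
      | succ m ih =>
        intro j hj
        by_cases h : j = r
        · exact h ▸ hanc_refl j
        · have hd := hdep j h
          exact ((hanc_step j h r).2 (Or.inr (ih (par j) (by omega))))
    exact fun j => this (dep j) j le_rfl
  -- matrices
  set S : ℝ := ∑ v : Fin n, ((Φ v)⁻¹) ^ 2 with hS_def
  set T : Fin n → ℝ := fun i => ∑ j, if anc i j then ((Φ j)⁻¹) ^ 2 else 0 with hT_def
  set K : Matrix (Fin n) (Fin n) ℝ :=
    Matrix.of (fun i j => if anc i j then Φ i * (Φ j)⁻¹ else 0) with hK_def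
  set B : Matrix (Fin n) (Fin n) ℝ :=
    Matrix.of (fun i v => if hv : v = r then (Φ i)⁻¹ else α ⟨v, hv⟩ i) with hB_def
  set C : Matrix (Fin n) (Fin n) ℝ :=
    Matrix.of (fun i v => if v = r then Φ i * T i else if i = v then -φ v else 0) with hC_def
  have hKapp : ∀ i j, K i j = if anc i j then Φ i * (Φ j)⁻¹ else 0 := fun i j => rfl
  have hBapp : ∀ i v, B i v = if hv : v = r then (Φ i)⁻¹ else α ⟨v, hv⟩ i := fun i v => rfl
  have hCapp : ∀ i v, C i v = if v = r then Φ i * T i else if i = v then -φ v else 0 :=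
    fun i v => rfl
  have hαapp : ∀ (v : {v : Fin n // v ≠ r}) (j : Fin n),
      α v j = (if j = par v.1 then 1 else 0) - φ v.1 * (if j = v.1 then 1 else 0) := by
    intro v j
    rw [hα v]
    simp [Pi.single_apply]
  -- K * B = C
  have hKB : K * B = C := by
    ext i v
    rw [Matrix.mul_apply]
    by_cases hv : v = r
    · rw [hv]
      rw [hCapp, if_pos rfl, hT_def, Finset.mul_sum]
      refine Finset.sum_congr rfl fun j _ => ?_
      rw [hKapp, hBapp, dif_pos rfl]
      by_cases hij : anc i j
      · rw [if_pos hij, if_pos hij]; ring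
      · rw [if_neg hij, if_neg hij, zero_mul, mul_zero]
    · have hsum : ∑ j, K i j * B j v = K i (par v) - K i v * φ v := by
        have : ∀ j, K i j * B j v
            = (if j = par v then K i j else 0) - (if j = v then K i j * φ v else 0) := by
          intro j
          rw [hBapp, dif_neg hv, hαapp ⟨v, hv⟩]
          split_ifs <;> ring
        rw [Finset.sum_congr rfl fun j _ => this j, Finset.sum_sub_distrib,
          Finset.sum_ite_eq' univ (par v) (fun j => K i j),
          Finset.sum_ite_eq' univ v (fun j => K i j * φ v)]
        simp
      rw [hsum, hCapp, if_neg hv]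
      by_cases hiv : i = v
      · subst hiv
        rw [if_pos rfl, hKapp, hKapp, if_neg (hnotanc i hv), if_pos (hanc_refl i),
          mul_inv_cancel₀ (hΦnz i)]
        ring
      · rw [if_neg hiv, hKapp, hKapp]
        by_cases hav : anc i v
        · have hap : anc i (par v) := by
            rcases (hanc_step v hv i).1 hav with h | h
            · exact absurd h hiv
            · exact h
          have h1 := hΦnz (par v)
          have h2 := hφnz v
          rw [if_pos hav, if_pos hap, hΦ v hv]
          field_simp
          ring
        · have hap : ¬ anc i (par v) := fun h => hav ((hanc_step v hv i).2 (Or.inr h))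
          rw [if_neg hav, if_neg hap]
          ring
  -- determinant of K
  have hdetK : K.det = 1 := by
    rw [det_eq_prod_diag K dep]
    · refine Finset.prod_eq_one fun i _ => ?_
      rw [hKapp, if_pos (hanc_refl i), mul_inv_cancel₀ (hΦnz i)]
    · intro i j hij hdij
      rw [hKapp, if_neg]
      intro h
      rcases hanc_dep i j h with h' | h'
      · exact hij h'
      · omega
  -- determinant of C
  have hdetC : C.det = T r * ∏ v : {v : Fin n // v ≠ r}, (-φ v.1) := by
    rw [det_eq_prod_diag C (fun v => if v = r then (∑ i, dep i) + 1 else dep v)]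
    · rw [← Finset.mul_prod_erase univ (fun i => C i i) (Finset.mem_univ r)]
      have h1 : C r r = T r := by rw [hCapp, if_pos rfl, hΦr, one_mul]
      have h2 : ∏ i ∈ univ.erase r, C i i = ∏ v : {v : Fin n // v ≠ r}, (-φ v.1) := by
        rw [Finset.prod_subtype (p := fun v => v ≠ r) (univ.erase r) (by simp)
          (fun i => C i i)]
        refine Finset.prod_congr rfl fun v _ => ?_
        rw [hCapp, if_neg v.2, if_pos rfl]
      rw [h1, h2]
    · intro i j hij hdij
      by_cases hj : j = r
      · subst hj
        rw [if_pos rfl, if_neg hij] at hdij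
        have : dep i ≤ ∑ k, dep k := Finset.single_le_sum (fun k _ => Nat.zero_le _)
          (Finset.mem_univ i)
        omega
      · rw [hCapp, if_neg hj, if_neg hij]
  have hTr : T r = S := by
    rw [hT_def, hS_def]
    exact Finset.sum_congr rfl fun j _ => if_pos (hanc_r j)
  -- determinant of B
  have hdetB : B.det = S * ∏ v : {v : Fin n // v ≠ r}, (-φ v.1) := by
    have := congrArg Matrix.det hKB
    rw [Matrix.det_mul, hdetK, one_mul] at this
    rw [this, hdetC, hTr]
  -- the Gram matrix of B's columns
  have hBtB : (Bᵀ * B).det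
      = S * (Matrix.of fun v w : {v : Fin n // v ≠ r} => α v ⬝ᵥ α w).det := by
    have horth : ∀ (v : {v : Fin n // v ≠ r}), ∑ k, (Φ k)⁻¹ * α v k = 0 := by
      intro v
      have : ∀ k, (Φ k)⁻¹ * α v k
          = (if k = par v.1 then (Φ k)⁻¹ else 0)
            - (if k = v.1 then (Φ k)⁻¹ * φ v.1 else 0) := by
        intro k
        rw [hαapp]
        split_ifs <;> ring
      rw [Finset.sum_congr rfl fun k _ => this k, Finset.sum_sub_distrib,
        Finset.sum_ite_eq' univ (par v.1) (fun k => (Φ k)⁻¹),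
        Finset.sum_ite_eq' univ v.1 (fun k => (Φ k)⁻¹ * φ v.1)]
      simp only [Finset.mem_univ, if_pos]
      rw [hΦ v.1 v.2]
      have h1 := hΦnz (par v.1)
      have h2 := hφnz v.1
      field_simp
      simp
    rw [Matrix.twoBlockTriangular_det (Bᵀ * B) (fun i => i = r)]
    · congr 1
      · -- the 1×1 block is S
        have hid : (Bᵀ * B).toSquareBlockProp (fun i => i = r)
            = (Bᵀ * B).toSquareBlock id r := rfl
        rw [hid, Matrix.det_toSquareBlock_id]
        rw [Matrix.mul_apply, hS_def]
        refine Finset.sum_congr rfl fun k _ => ?_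
        rw [Matrix.transpose_apply, hBapp, dif_pos rfl]
        ring
      · -- the other block is the Gram matrix
        have : ((Bᵀ * B).toSquareBlockProp (fun i => ¬ i = r))
            = (Matrix.of fun v w : {v : Fin n // v ≠ r} => α v ⬝ᵥ α w) := by
          ext v w
          show (Bᵀ * B) v.1 w.1 = α v ⬝ᵥ α w
          rw [Matrix.mul_apply, dotProduct]
          refine Finset.sum_congr rfl fun k _ => ?_
          rw [Matrix.transpose_apply, hBapp, hBapp, dif_neg v.2, dif_neg w.2]
        rw [this]
    · -- off-block entries vanish: orthogonality
      intro i hi j hj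
      rw [hj, Matrix.mul_apply]
      rw [show (0 : ℝ) = ∑ k, (Φ k)⁻¹ * α ⟨i, hi⟩ k from (horth ⟨i, hi⟩).symm]
      refine Finset.sum_congr rfl fun k _ => ?_
      rw [Matrix.transpose_apply, hBapp, hBapp, dif_pos rfl, dif_neg hi]
      ring
  -- positivity of S
  have hSne : S ≠ 0 := by
    have h1 : (1 : ℝ) ≤ S := by
      have := Finset.single_le_sum (f := fun v : Fin n => ((Φ v)⁻¹) ^ 2)
        (fun v _ => sq_nonneg _) (Finset.mem_univ r)
      rw [hS_def]
      simpa [hΦr] using this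
    linarith
  -- assemble
  have hBsq : (Bᵀ * B).det = S * ((∏ v : {v : Fin n // v ≠ r}, (φ v.1) ^ 2) * S) := by
    rw [Matrix.det_mul, Matrix.det_transpose, hdetB]
    rw [show ∏ v : {v : Fin n // v ≠ r}, (φ v.1) ^ 2
        = ∏ v : {v : Fin n // v ≠ r}, (-φ v.1) ^ 2 from
      Finset.prod_congr rfl fun v _ => (neg_sq _).symm, Finset.prod_pow]
    ring
  rw [hBsq] at hBtB
  exact mul_left_cancel₀ hSne hBtB.symm
end

section
/- Let H be a unicyclic graph (connected, n vertices, n edges) with connection coefficients φ and cycle holonomy w. With α_{ij} = u_i − φ_{ij} u_j, the Gram determinant det G(A_H, A_H) equals (1−w)^2 · ∏ φ_{ij}^2, where the product is over the edges in the trees attached to the cycle (the 'antlers') directed away from the cycle. In particular, if w = 1 then the vectors {α_{ij}} over the edges of H are linearly dependent. -/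
/-!
Order the edges so that the cycle edges come first and identify each antler edge with its endpoint
away from the cycle; then the edge-by-vertex matrix `N` of the vectors `α` is square, its Gram
matrix is `N Nᵀ`, and `N` is block lower triangular. The cycle block is `1 - (weighted cyclic
shift)`, with determinant `1 - w` (Laplace expansion along the first column leaves two triangular
minors), and the antler block is triangular with respect to the depth, with diagonal `-φ` over the
antler edges. Hence `det N = ± (1 - w) ∏ φ`, which vanishes exactly when the rows of `N`, i.e.
the `α`, are dependent.
-/

open Matrix

open scoped Classical

def cycSucc {s : ℕ} (h : 0 < s) (i : Fin s) : Fin s := ⟨(i.val + 1) % s, Nat.mod_lt _ h⟩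

theorem cycSucc_eq_add_one {m : ℕ} (h : 0 < m + 1) (i : Fin (m + 1)) : cycSucc h i = i + 1 :=
  Fin.ext (by simp [cycSucc, Fin.val_add])

namespace Matrix

variable {R : Type*} [CommRing R]

theorem det_eq_prod_diag_of_offDiag_rank_lt {T : Type*} [Fintype T] [DecidableEq T]
    (M : Matrix T T R) (d : T → ℕ) (hM : ∀ v u, v ≠ u → M v u ≠ 0 → d u < d v) :
    M.det = ∏ v, M v v := by
  rw [det_apply', Finset.sum_eq_single 1 _ (by simp)]
  · simp
  intro σ _ hσ
  obtain ⟨v₀, hv₀⟩ : ∃ v, σ v ≠ v := by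
    by_contra! h
    exact hσ (Equiv.ext h)
  suffices ∏ v, M (σ v) v = 0 by rw [this, mul_zero]
  by_contra hne
  have hσM : ∀ v, M (σ v) v ≠ 0 := fun v hv =>
    hne (Finset.prod_eq_zero (Finset.mem_univ v) hv)
  -- each factor of the term of `σ` lowers the rank unless `σ` fixes it, so the total rank would
  -- be smaller than itself
  have hle : ∀ v ∈ Finset.univ, d v ≤ d (σ v) := fun v _ => by
    by_cases h : σ v = v
    · rw [h]
    · exact (hM _ _ h (hσM v)).le
  have hlt := Finset.sum_lt_sum hle ⟨v₀, Finset.mem_univ _, hM _ _ hv₀ (hσM v₀)⟩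
  rw [Equiv.sum_comp σ d] at hlt
  exact hlt.false

theorem det_single_parent_sub_smul_single {T V : Type*} [Fintype T] [DecidableEq T]
    [DecidableEq V] (ι : T → V) (hι : Function.Injective ι) (par : V → V) (dep : V → ℕ)
    (hdep : ∀ t, dep (ι t) = dep (par (ι t)) + 1) (g : T → R) :
    (of fun t u => (Pi.single (par (ι t)) 1 - g t • Pi.single (ι t) 1 : V → R) (ι u)).det
      = ∏ t, -g t := by
  have hpar : ∀ t, ι t ≠ par (ι t) := fun t h => by
    have := hdep t
    rw [← h] at this
    omega
  rw [det_eq_prod_diag_of_offDiag_rank_lt _ fun t => dep (ι t)]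
  · simp [Pi.single_apply, hpar]
  · intro t u htu hne
    have hu : ι u = par (ι t) := by
      by_contra h
      simp [Pi.single_apply, h, hι.ne htu.symm] at hne
    rw [hu, hdep t]
    omega

def cycShift {n : ℕ} [NeZero n] (g : Fin n → R) : Matrix (Fin n) (Fin n) R :=
  of fun i j => if j = i + 1 then g i else 0

theorem cycShift_apply {n : ℕ} [NeZero n] (g : Fin n → R) (i j : Fin n) :
    cycShift g i j = if j = i + 1 then g i else 0 :=
  rfl

theorem det_submatrix_succ_succ_one_sub_cycShift {m : ℕ} (g : Fin (m + 2) → R) :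
    ((1 - cycShift g).submatrix Fin.succ Fin.succ).det = 1 := by
  rw [det_of_isUpperTriangular]
  · simp [cycShift_apply]
  · intro i j hij
    rw [id, id, Fin.lt_def] at hij
    simp only [submatrix_apply, sub_apply, one_apply, cycShift_apply, Fin.ext_iff, Fin.val_add_one,
      Fin.val_succ, Fin.val_last]
    split_ifs <;> first | omega | simp_all

theorem det_submatrix_castSucc_succ_one_sub_cycShift {m : ℕ} (g : Fin (m + 2) → R) :
    ((1 - cycShift g).submatrix Fin.castSucc Fin.succ).det
      = ∏ i : Fin (m + 1), -g i.castSucc := by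
  rw [det_of_isLowerTriangular]
  · simp [cycShift_apply, Fin.castSucc_lt_succ.ne]
  · intro i j hij
    rw [OrderDual.toDual_lt_toDual, Fin.lt_def] at hij
    simp only [submatrix_apply, sub_apply, one_apply, cycShift_apply, Fin.ext_iff, Fin.val_add_one,
      Fin.val_succ, Fin.val_castSucc, Fin.val_last]
    split_ifs <;> first | omega | simp_all

theorem det_one_sub_cycShift {m : ℕ} (g : Fin (m + 1) → R) :
    (1 - cycShift g).det = 1 - ∏ i, g i := by
  rcases m with _ | m
  · simp [det_unique, cycShift]
  rw [det_succ_column_zero, Fintype.sum_eq_add 0 (Fin.last _) Fin.last_pos.ne]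
  · have hsign : (-1 : R) ^ (m + 1) * (-1) ^ (m + 1) = 1 := by rw [← mul_pow]; simp
    rw [Fin.succAbove_zero, Fin.succAbove_last, det_submatrix_succ_succ_one_sub_cycShift,
      det_submatrix_castSucc_succ_one_sub_cycShift, Fin.prod_univ_castSucc g]
    simp [cycShift_apply, Fin.last_add_one, Finset.prod_neg]
    linear_combination (-(g (Fin.last _) * ∏ i : Fin (m + 1), g i.castSucc)) * hsign
  · rintro i ⟨hi0, hilast⟩
    have hsucc : i + 1 ≠ 0 := by rwa [← Fin.last_add_one, Ne, add_left_inj]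
    simp [cycShift_apply, hi0, eq_comm (a := (0 : Fin _)), hsucc]

theorem det_gram_eq_sq {ι V : Type*} [Fintype ι] [DecidableEq ι] [Fintype V]
    (α : ι → V → R) (e : ι ≃ V) :
    (of fun a b => α a ⬝ᵥ α b).det = (of fun a b => α a (e b)).det ^ 2 := by
  have hgram : (of fun a b => α a ⬝ᵥ α b) =
      (of fun a b => α a (e b)) * (of fun a b => α a (e b))ᵀ := by
    ext a b
    simp only [mul_apply, of_apply, transpose_apply, dotProduct]
    exact (e.sum_comp fun v => α a v * α b v).symm
  rw [hgram, det_mul, det_transpose, sq]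

theorem det_ne_zero_of_linearIndependent {K ι V : Type*} [Field K] [Fintype ι] [DecidableEq ι]
    (α : ι → V → K) (e : ι ≃ V) (hα : LinearIndependent K α) :
    (of fun a b => α a (e b)).det ≠ 0 := by
  have hrows : LinearIndependent K fun a => (of fun a b => α a (e b)) a :=
    hα.map' (LinearEquiv.funCongrLeft K K e).toLinearMap (LinearEquiv.ker _)
  exact ((isUnit_iff_isUnit_det _).mp (linearIndependent_rows_iff_isUnit.mp hrows)).ne_zero

end Matrix

/-- For a unicyclic graph on `Fin n` — a cycle `c 0, c 1, ..., c (s-1)` with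
trees ("antlers") attached, encoded by a parent function `par` pointing towards the cycle —
with connection `φ` and cycle holonomy `w`, the Gram determinant of the vectors
`α_{ij} = u_i - φ i j • u_j` over all edges (cycle edges directed along the cycle, antler
edges directed away from the cycle) equals `(1-w)^2 · ∏ φ^2` over the antler edges directed
away from the cycle; in particular if `w = 1` the vectors `α` are linearly dependent. -/
theorem det_P_unicyclic (n s : ℕ) (hs : 3 ≤ s)
    (φ : Fin n → Fin n → ℝ)
    (c : Fin s → Fin n) (hc : Function.Injective c)
    (par : Fin n → Fin n) (dep : Fin n → ℕ)
    (hdep : ∀ v, (¬ ∃ i, c i = v) → dep v = dep (par v) + 1)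
    (w : ℝ) (hw : w = ∏ i : Fin s, φ (c i) (c (cycSucc (by omega) i)))
    (α : Fin s ⊕ {v : Fin n // ¬ ∃ i, c i = v} → (Fin n → ℝ))
    (hα₁ : ∀ i, α (Sum.inl i) = (Pi.single (c i) 1 : Fin n → ℝ)
      - φ (c i) (c (cycSucc (by omega) i)) • (Pi.single (c (cycSucc (by omega) i)) 1 : Fin n → ℝ))
    (hα₂ : ∀ v, α (Sum.inr v) = (Pi.single (par v.1) 1 : Fin n → ℝ)
      - φ (par v.1) v.1 • (Pi.single v.1 1 : Fin n → ℝ)) :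
    (Matrix.of fun a b => α a ⬝ᵥ α b).det
        = (1 - w) ^ 2 * ∏ v : {v : Fin n // ¬ ∃ i, c i = v}, (φ (par v.1) v.1) ^ 2
      ∧ (w = 1 → ¬ LinearIndependent ℝ α) := by
  obtain ⟨m, rfl⟩ : ∃ m, s = m + 1 := ⟨s - 1, by omega⟩
  let e : Fin (m + 1) ⊕ {v : Fin n // ¬ ∃ i, c i = v} ≃ Fin n :=
    (Equiv.sumCongr (Equiv.ofInjective c hc) (Equiv.refl _)).trans (Equiv.sumCompl _)
  have hN : (of fun a b => α a (e b)) = fromBlocks (1 - cycShift fun i => φ (c i) (c (i + 1))) 0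
      (of fun v i => α (.inr v) (c i)) (of fun v u => α (.inr v) u.1) := by
    ext (i | v) (j | u)
    · show α (.inl i) (c j) = _
      simp [hα₁, cycShift_apply, one_apply, Pi.single_apply, hc.eq_iff, cycSucc_eq_add_one,
        eq_comm]
    · have h1 : u.1 ≠ c i := fun h => u.2 ⟨i, h.symm⟩
      have h2 : u.1 ≠ c (i + 1) := fun h => u.2 ⟨_, h.symm⟩
      show α (.inl i) u.1 = 0
      simp [hα₁, cycSucc_eq_add_one, h1, h2]
    all_goals rfl
  have hcycle : (1 - cycShift fun i => φ (c i) (c (i + 1))).det = 1 - w := by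
    rw [det_one_sub_cycShift, hw]
    simp only [cycSucc_eq_add_one]
  have hantler : (of fun v u : {v : Fin n // ¬ ∃ i, c i = v} => α (.inr v) u.1).det
      = ∏ v : {v : Fin n // ¬ ∃ i, c i = v}, -φ (par v.1) v.1 := by
    simp only [hα₂]
    exact det_single_parent_sub_smul_single _ Subtype.val_injective par dep
      (fun v => hdep v.1 v.2) _
  have hdetN : (of fun a b => α a (e b)).det
      = (1 - w) * ∏ v : {v : Fin n // ¬ ∃ i, c i = v}, -φ (par v.1) v.1 := by
    rw [hN, det_fromBlocks_zero₁₂, hcycle, hantler]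
  refine ⟨?_, fun hw1 hli => det_ne_zero_of_linearIndependent α e hli (by simp [hdetN, hw1])⟩
  rw [det_gram_eq_sq α e, hdetN, mul_pow, ← Finset.prod_pow]
  simp only [neg_sq]
end

section
/- Let M and X be two k-dimensional linear subspaces of R^n, and let M^⊥ and X^⊥ be their orthogonal complements. Then ∠(M^⊥, X^⊥) = ∠(M, X), where ∠(U,V) = (det G(B_U, B_V))^2 / (det G(B_U,B_U) · det G(B_V,B_V)) for any choice of bases B_U of U and B_V of V. -/
open Matrix
open scoped RealInnerProductSpace

/-!
The angle is unchanged when the bases are replaced by their Gram–Schmidt orthonormalizations,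
since a change of bases multiplies the Gram matrices by invertible matrices on both sides and
these factors cancel in the quotient. For orthonormal bases `e, f` the angle is
`det G(e, f) ^ 2`. Completing `e` by an orthonormal basis `e'` of `(span e)ᗮ`, and likewise
`f` by `f'`, the cross Gram matrix `U = [[A, B], [C, D]]` of the two resulting orthonormal bases
of the whole space is orthogonal, so `A Aᵀ = 1 - B Bᵀ` and `Dᵀ D = 1 - Bᵀ B`. The
Weinstein–Aronszajn identity `det (1 - B Bᵀ) = det (1 - Bᵀ B)` then gives
`det A ^ 2 = det D ^ 2`.
-/

namespace Matrix

theorem det_toBlocks₁₁_sq_eq_det_toBlocks₂₂_sq {ι κ R : Type*} [Fintype ι] [Fintype κ]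
    [DecidableEq ι] [DecidableEq κ] [CommRing R] {U : Matrix (ι ⊕ κ) (ι ⊕ κ) R}
    (hU : U ∈ orthogonalGroup (ι ⊕ κ) R) :
    U.toBlocks₁₁.det ^ 2 = U.toBlocks₂₂.det ^ 2 := by
  have hUUt := (mem_orthogonalGroup_iff _ _).mp hU
  have hUtU := (mem_orthogonalGroup_iff' _ _).mp hU
  rw [← fromBlocks_toBlocks U, fromBlocks_transpose, fromBlocks_multiply,
    ← fromBlocks_one] at hUUt hUtU
  have h₁₁ := eq_sub_of_add_eq (fromBlocks_inj.mp hUUt).1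
  have h₂₂ := eq_sub_of_add_eq' (fromBlocks_inj.mp hUtU).2.2.2
  calc U.toBlocks₁₁.det ^ 2 = (U.toBlocks₁₁ * U.toBlocks₁₁ᵀ).det := by
        rw [det_mul, det_transpose, sq]
    _ = (U.toBlocks₂₂ᵀ * U.toBlocks₂₂).det := by rw [h₁₁, h₂₂, det_one_sub_mul_comm]
    _ = U.toBlocks₂₂.det ^ 2 := by rw [det_mul, det_transpose, sq]

end Matrix

namespace GramAngle

open Submodule Set Module InnerProductSpace

variable {E : Type*} [NormedAddCommGroup E] [InnerProductSpace ℝ E] {ι κ : Type*}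

def crossGram (v : ι → E) (w : κ → E) : Matrix ι κ ℝ :=
  of fun i j => ⟪v i, w j⟫

/-- The paper's `∠(span v, span w)`, computed from the bases `v` and `w`. -/
noncomputable def gramAngle [Fintype ι] [DecidableEq ι] (v w : ι → E) : ℝ :=
  (crossGram v w).det ^ 2 / ((crossGram v v).det * (crossGram w w).det)

theorem crossGram_sum_smul {ι' κ' : Type*} [Fintype ι] [Fintype κ] (S : Matrix ι' ι ℝ)
    (T : Matrix κ' κ ℝ) (v : ι → E) (w : κ → E) :
    crossGram (fun i => ∑ j, S i j • v j) (fun i => ∑ j, T i j • w j)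
      = S * crossGram v w * Tᵀ := by
  ext i j
  simp only [crossGram, mul_apply, of_apply, transpose_apply, sum_inner, inner_sum,
    real_inner_smul_left, real_inner_smul_right, Finset.sum_mul]
  exact Finset.sum_congr rfl fun _ _ => Finset.sum_congr rfl fun _ _ => by ring

theorem crossGram_self_of_orthonormal [DecidableEq ι] {e : ι → E} (he : Orthonormal ℝ e) :
    crossGram e e = 1 := by
  ext i j
  rw [crossGram, of_apply, orthonormal_iff_ite.mp he, one_apply]

theorem exists_isUnit_det_sum_smul_of_span_eq {R M : Type*} [CommRing R] [AddCommGroup M]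
    [Module R M] [Fintype ι] [DecidableEq ι] {v e : ι → M} (hv : LinearIndependent R v)
    (he : LinearIndependent R e) (h : span R (range v) = span R (range e)) :
    ∃ S : Matrix ι ι R, IsUnit S.det ∧ v = fun i => ∑ j, S i j • e j := by
  let bv := (Basis.span hv).map (LinearEquiv.ofEq _ _ h)
  let be := Basis.span he
  refine ⟨(be.toMatrix bv)ᵀ, ?_, funext fun i => ?_⟩
  · rw [det_transpose, ← Basis.det_apply]
    exact be.isUnit_det bv
  · have := congrArg (span R (range e)).subtype (be.sum_toMatrix_smul_self bv i)
    simpa [bv, be, Basis.span_apply] using this.symm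

theorem gramAngle_sum_smul [Fintype ι] [DecidableEq ι] {S T : Matrix ι ι ℝ}
    (hS : IsUnit S.det) (hT : IsUnit T.det) (v w : ι → E) :
    gramAngle (fun i => ∑ j, S i j • v j) (fun i => ∑ j, T i j • w j) = gramAngle v w := by
  simp only [gramAngle, crossGram_sum_smul, det_mul, det_transpose]
  have hST : S.det ^ 2 * T.det ^ 2 ≠ 0 := by simp [hS.ne_zero, hT.ne_zero]
  calc _ = S.det ^ 2 * T.det ^ 2 * (crossGram v w).det ^ 2
        / (S.det ^ 2 * T.det ^ 2 * ((crossGram v v).det * (crossGram w w).det)) := by ring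
    _ = _ := mul_div_mul_left _ _ hST

theorem gramAngle_eq_of_span_eq [Fintype ι] [DecidableEq ι] {v e w f : ι → E}
    (hv : LinearIndependent ℝ v) (he : LinearIndependent ℝ e)
    (hw : LinearIndependent ℝ w) (hf : LinearIndependent ℝ f)
    (hve : span ℝ (range v) = span ℝ (range e)) (hwf : span ℝ (range w) = span ℝ (range f)) :
    gramAngle v w = gramAngle e f := by
  obtain ⟨S, hS, rfl⟩ := exists_isUnit_det_sum_smul_of_span_eq hv he hve
  obtain ⟨T, hT, rfl⟩ := exists_isUnit_det_sum_smul_of_span_eq hw hf hwf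
  exact gramAngle_sum_smul hS hT e f

theorem gramAngle_of_orthonormal [Fintype ι] [DecidableEq ι] {e f : ι → E}
    (he : Orthonormal ℝ e) (hf : Orthonormal ℝ f) :
    gramAngle e f = (crossGram e f).det ^ 2 := by
  rw [gramAngle, crossGram_self_of_orthonormal he, crossGram_self_of_orthonormal hf]
  simp

theorem crossGram_mem_orthogonalGroup [Fintype ι] [DecidableEq ι]
    (a b : OrthonormalBasis ι ℝ E) : crossGram a b ∈ orthogonalGroup ι ℝ := by
  have : crossGram a b = a.toBasis.toMatrix b := by
    ext i j
    simp [crossGram, Basis.toMatrix_apply, OrthonormalBasis.repr_apply_apply]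
  exact this ▸ a.toMatrix_orthonormalBasis_mem_orthogonal b

theorem orthonormal_sumElim {e : ι → E} {e' : κ → E} (he : Orthonormal ℝ e)
    (he' : Orthonormal ℝ e') (h : ∀ i j, ⟪e i, e' j⟫ = 0) : Orthonormal ℝ (Sum.elim e e') := by
  refine ⟨Sum.forall.mpr ⟨he.1, he'.1⟩, ?_⟩
  rintro (i | i) (j | j) hij
  · exact he.2 (Sum.inl_injective.ne_iff.mp hij)
  · exact h i j
  · exact real_inner_comm (e' i) (e j) ▸ h j i
  · exact he'.2 (Sum.inr_injective.ne_iff.mp hij)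

theorem exists_orthonormalBasis_sumElim [Fintype ι] [Fintype κ] {e : ι → E} {e' : κ → E}
    (he : Orthonormal ℝ e) (he' : Orthonormal ℝ e')
    (h : span ℝ (range e') = (span ℝ (range e))ᗮ) :
    ∃ b : OrthonormalBasis (ι ⊕ κ) ℝ E, ⇑b = Sum.elim e e' := by
  have hperp : ∀ i j, ⟪e i, e' j⟫ = 0 := fun i j =>
    inner_right_of_mem_orthogonal (subset_span (mem_range_self i))
      (h ▸ subset_span (mem_range_self j))
  have : FiniteDimensional ℝ (span ℝ (range e)) := .span_of_finite ℝ (finite_range e)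
  refine ⟨OrthonormalBasis.mk (orthonormal_sumElim he he' hperp) ?_, OrthonormalBasis.coe_mk _ _⟩
  rw [Sum.elim_range, span_union, h, sup_orthogonal_of_hasOrthogonalProjection]

theorem gramAngle_eq_of_span_eq_orthogonal [Fintype ι] [DecidableEq ι] [Fintype κ]
    [DecidableEq κ] {e f : ι → E} {e' f' : κ → E}
    (he : Orthonormal ℝ e) (hf : Orthonormal ℝ f) (he' : Orthonormal ℝ e') (hf' : Orthonormal ℝ f')
    (hee' : span ℝ (range e') = (span ℝ (range e))ᗮ)
    (hff' : span ℝ (range f') = (span ℝ (range f))ᗮ) :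
    gramAngle e' f' = gramAngle e f := by
  obtain ⟨b, hb⟩ := exists_orthonormalBasis_sumElim he he' hee'
  obtain ⟨c, hc⟩ := exists_orthonormalBasis_sumElim hf hf' hff'
  have hblocks := det_toBlocks₁₁_sq_eq_det_toBlocks₂₂_sq (crossGram_mem_orthogonalGroup b c)
  rw [hb, hc] at hblocks
  rw [gramAngle_of_orthonormal he hf, gramAngle_of_orthonormal he' hf']
  exact hblocks.symm

theorem span_gramSchmidtNormed_range_eq [LinearOrder ι] [LocallyFiniteOrderBot ι]
    [WellFoundedLT ι] (v : ι → E) :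
    span ℝ (range (gramSchmidtNormed ℝ v)) = span ℝ (range v) := by
  rw [span_gramSchmidtNormed_range, span_gramSchmidt]

theorem gramAngle_gramSchmidtNormed [Fintype ι] [DecidableEq ι] [LinearOrder ι]
    [LocallyFiniteOrderBot ι] [WellFoundedLT ι] {v w : ι → E}
    (hv : LinearIndependent ℝ v) (hw : LinearIndependent ℝ w) :
    gramAngle (gramSchmidtNormed ℝ v) (gramSchmidtNormed ℝ w) = gramAngle v w :=
  gramAngle_eq_of_span_eq (gramSchmidtNormed_orthonormal hv).linearIndependent hv
    (gramSchmidtNormed_orthonormal hw).linearIndependent hw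
    (span_gramSchmidtNormed_range_eq v) (span_gramSchmidtNormed_range_eq w)

end GramAngle

open GramAngle InnerProductSpace

theorem angle_orthogonal_complement_general (n k : ℕ)
    (M X : Submodule ℝ (EuclideanSpace ℝ (Fin n)))
    (v x : Fin k → EuclideanSpace ℝ (Fin n))
    (hv : Submodule.span ℝ (Set.range v) = M) (hvi : LinearIndependent ℝ v)
    (hx : Submodule.span ℝ (Set.range x) = X) (hxi : LinearIndependent ℝ x)
    (v' x' : Fin (n - k) → EuclideanSpace ℝ (Fin n))
    (hv' : Submodule.span ℝ (Set.range v') = Mᗮ) (hvi' : LinearIndependent ℝ v')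
    (hx' : Submodule.span ℝ (Set.range x') = Xᗮ) (hxi' : LinearIndependent ℝ x') :
    (Matrix.of fun i j => ⟪v' i, x' j⟫).det ^ 2
        / ((Matrix.of fun i j => ⟪v' i, v' j⟫).det *
            (Matrix.of fun i j => ⟪x' i, x' j⟫).det)
      = (Matrix.of fun i j => ⟪v i, x j⟫).det ^ 2
        / ((Matrix.of fun i j => ⟪v i, v j⟫).det *
            (Matrix.of fun i j => ⟪x i, x j⟫).det) := by
  change gramAngle v' x' = gramAngle v x
  rw [← gramAngle_gramSchmidtNormed hvi' hxi', ← gramAngle_gramSchmidtNormed hvi hxi]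
  exact gramAngle_eq_of_span_eq_orthogonal (gramSchmidtNormed_orthonormal hvi)
    (gramSchmidtNormed_orthonormal hxi) (gramSchmidtNormed_orthonormal hvi')
    (gramSchmidtNormed_orthonormal hxi')
    (by rw [span_gramSchmidtNormed_range_eq, span_gramSchmidtNormed_range_eq, hv, hv'])
    (by rw [span_gramSchmidtNormed_range_eq, span_gramSchmidtNormed_range_eq, hx, hx'])

/-- For two `k`-dimensional subspaces `M, X` of `ℝ^n`,
`∠(Mᗮ, Xᗮ) = ∠(M, X)`, where `∠(U,V) = det G(B_U,B_V)^2 / (det G(B_U,B_U) · det G(B_V,B_V))`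
for any bases `B_U`, `B_V`. -/
theorem angle_orthogonal_complement (n k : ℕ) (hk : k ≤ n)
    (M X : Submodule ℝ (EuclideanSpace ℝ (Fin n)))
    (hM : Module.finrank ℝ M = k) (hX : Module.finrank ℝ X = k)
    (v x : Fin k → EuclideanSpace ℝ (Fin n))
    (hv : Submodule.span ℝ (Set.range v) = M) (hvi : LinearIndependent ℝ v)
    (hx : Submodule.span ℝ (Set.range x) = X) (hxi : LinearIndependent ℝ x)
    (v' x' : Fin (n - k) → EuclideanSpace ℝ (Fin n))
    (hv' : Submodule.span ℝ (Set.range v') = Mᗮ) (hvi' : LinearIndependent ℝ v')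
    (hx' : Submodule.span ℝ (Set.range x') = Xᗮ) (hxi' : LinearIndependent ℝ x') :
    (Matrix.of fun i j => ⟪v' i, x' j⟫).det ^ 2
        / ((Matrix.of fun i j => ⟪v' i, v' j⟫).det *
            (Matrix.of fun i j => ⟪x' i, x' j⟫).det)
      = (Matrix.of fun i j => ⟪v i, x j⟫).det ^ 2
        / ((Matrix.of fun i j => ⟪v i, v j⟫).det *
            (Matrix.of fun i j => ⟪x i, x j⟫).det) :=
  angle_orthogonal_complement_general n k M X v x hv hvi hx hxi v' x' hv' hvi' hx' hxi'
end

section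
/- Let H be a finite tree on vertex set contained in {1,...,n} with connection coefficients φ on its directed edges, and fix a root r. Define b_H = ∑_{u vertex of H} φ_{Λ(u,r)} u_u and f_H = ∑_{u vertex of H} φ_{Λ(r,u)} u_u, where φ_{Λ(u,r)} is the product of the φ along the unique path from u to r (and φ_{Λ(r,u)} the product along the path from r to u). Then within the span V of the basis vectors corresponding to the vertices of H, the orthogonal complement of the span of {α_{ij} = u_i − φ_{ij} u_j : (i,j) edge of H} is one-dimensional and spanned by b_H, and the orthogonal complement of the span of {e_{ij} = u_i − φ_{ji} u_j : (i,j) edge} is one-dimensional and spanned by f_H. -/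
/-!
In the orthonormal coordinates `u_v` of `V`, a vector `∑ c v • u v` is orthogonal to the edge
vector `u (par v) - w v • u v` exactly when `c (par v) = w v * c v`. If `β` is one nowhere
vanishing solution of these edge relations, the ratio `c / β` is therefore constant along every
edge; since each vertex reaches the root through its parents, the ratio is globally constant and
the solutions are the multiples of `β`. The path products `Φ⁻¹` and `Φ` solve the relations for
the `α`- and the `e`-vectors respectively.
-/

open Submodule Set

open scoped RealInnerProductSpace

section RootedTree

variable {T : Type*} {r : T} {par : T → T} {dep : T → ℕ}

theorem induction_from_root (hdep : ∀ v, v ≠ r → dep v = dep (par v) + 1) {P : T → Prop}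
    (root : P r) (step : ∀ v, v ≠ r → P (par v) → P v) (v : T) : P v := by
  induction hk : dep v using Nat.strong_induction_on generalizing v with
  | _ k ih =>
    by_cases hv : v = r
    · exact hv ▸ root
    · exact step v hv (ih _ (by rw [← hk, hdep v hv]; omega) _ rfl)

theorem apply_eq_apply_root_of_eq_apply_par (hdep : ∀ v, v ≠ r → dep v = dep (par v) + 1)
    {β : Type*} {g : T → β} (hg : ∀ v, v ≠ r → g v = g (par v)) (v : T) : g v = g r :=
  induction_from_root (P := fun v => g v = g r) hdep rfl (fun v hv h => (hg v hv).trans h) v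

end RootedTree

section OrthonormalFamily

variable {E : Type*} [NormedAddCommGroup E] [InnerProductSpace ℝ E]

theorem mem_orthogonal_span_range_iff {ι : Type*} {s : ι → E} {x : E} :
    x ∈ (span ℝ (range s))ᗮ ↔ ∀ i, ⟪s i, x⟫ = 0 := by
  rw [← span_singleton_le_iff_mem, ← isOrtho_iff_le, isOrtho_span]
  simp [real_inner_comm]

variable {T : Type*} [Fintype T] {u : T → E}

theorem Orthonormal.inner_sub_smul_sum (hu : Orthonormal ℝ u) (i j : T) (a : ℝ) (c : T → ℝ) :
    ⟪u i - a • u j, ∑ v, c v • u v⟫ = c i - a * c j := by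
  rw [inner_sub_left, real_inner_smul_left, hu.inner_right_fintype, hu.inner_right_fintype]

theorem Orthonormal.orthogonal_span_edges_inf_span_eq (hu : Orthonormal ℝ u) {r : T}
    {par : T → T} {dep : T → ℕ} (hdep : ∀ v, v ≠ r → dep v = dep (par v) + 1) {w β : T → ℝ}
    (hβ : ∀ v, β v ≠ 0) (hβw : ∀ v, v ≠ r → β (par v) = w v * β v) :
    (span ℝ (range fun v : {v // v ≠ r} => u (par v) - w v • u v))ᗮ ⊓ span ℝ (range u)
      = span ℝ {∑ v, β v • u v} := by
  have hsum_mem : ∀ c : T → ℝ, ∑ v, c v • u v ∈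
      (span ℝ (range fun v : {v // v ≠ r} => u (par v) - w v • u v))ᗮ ↔
      ∀ v, v ≠ r → c (par v) = w v * c v := by
    intro c
    rw [mem_orthogonal_span_range_iff, Subtype.forall]
    simp only [hu.inner_sub_smul_sum, sub_eq_zero]
  apply le_antisymm
  · rintro x ⟨hx_orth, hx_span⟩
    obtain ⟨c, rfl⟩ := (mem_span_range_iff_exists_fun ℝ).1 hx_span
    have hc := (hsum_mem c).1 hx_orth
    have hratio : ∀ v, c v / β v = c r / β r :=
      apply_eq_apply_root_of_eq_apply_par hdep fun v hv => by
        have hw : w v ≠ 0 := left_ne_zero_of_mul (hβw v hv ▸ hβ (par v))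
        rw [hc v hv, hβw v hv, mul_div_mul_left _ _ hw]
    refine mem_span_singleton.2 ⟨c r / β r, ?_⟩
    rw [Finset.smul_sum]
    refine Finset.sum_congr rfl fun v _ => ?_
    rw [smul_smul, ← hratio v, div_mul_cancel₀ _ (hβ v)]
  · rw [span_le, singleton_subset_iff]
    exact ⟨(hsum_mem β).2 hβw, sum_mem fun v _ => smul_mem _ _ (subset_span (mem_range_self v))⟩

end OrthonormalFamily

theorem tree_orthogonal_complement_general (n m : ℕ) (ι : Fin (m + 1) → Fin n)
    (hι : Function.Injective ι)
    (r : Fin (m + 1)) (par : Fin (m + 1) → Fin (m + 1)) (dep : Fin (m + 1) → ℕ)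
    (hdep : ∀ v, v ≠ r → dep v = dep (par v) + 1)
    (φ : Fin (m + 1) → Fin (m + 1) → ℝ)
    (hφnz : ∀ i j, φ i j ≠ 0) (hφinv : ∀ i j, φ j i = (φ i j)⁻¹)
    (Φ : Fin (m + 1) → ℝ) (hΦr : Φ r = 1) (hΦ : ∀ v, v ≠ r → Φ v = Φ (par v) * φ (par v) v)
    (V : Submodule ℝ (EuclideanSpace ℝ (Fin n)))
    (hV : V = Submodule.span ℝ (Set.range fun v : Fin (m + 1) =>
      EuclideanSpace.single (ι v) (1 : ℝ)))
    (α e : {v : Fin (m + 1) // v ≠ r} → EuclideanSpace ℝ (Fin n))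
    (hα : ∀ v, α v = EuclideanSpace.single (ι (par v.1)) (1 : ℝ)
      - φ (par v.1) v.1 • EuclideanSpace.single (ι v.1) (1 : ℝ))
    (he : ∀ v, e v = EuclideanSpace.single (ι (par v.1)) (1 : ℝ)
      - φ v.1 (par v.1) • EuclideanSpace.single (ι v.1) (1 : ℝ))
    (b f : EuclideanSpace ℝ (Fin n))
    (hb : b = ∑ v : Fin (m + 1), (Φ v)⁻¹ • EuclideanSpace.single (ι v) (1 : ℝ))
    (hf : f = ∑ v : Fin (m + 1), (Φ v) • EuclideanSpace.single (ι v) (1 : ℝ)) :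
    (Submodule.span ℝ (Set.range α))ᗮ ⊓ V = Submodule.span ℝ {b}
      ∧ (Submodule.span ℝ (Set.range e))ᗮ ⊓ V = Submodule.span ℝ {f} := by
  have hu : Orthonormal ℝ fun v => EuclideanSpace.single (ι v) (1 : ℝ) :=
    EuclideanSpace.orthonormal_single.comp ι hι
  have hΦ_ne : ∀ v, Φ v ≠ 0 := induction_from_root hdep (hΦr ▸ one_ne_zero)
    fun v hv h => hΦ v hv ▸ mul_ne_zero h (hφnz _ _)
  obtain rfl : α = fun v => EuclideanSpace.single (ι (par v.1)) (1 : ℝ)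
      - φ (par v.1) v.1 • EuclideanSpace.single (ι v.1) (1 : ℝ) := funext hα
  obtain rfl : e = fun v => EuclideanSpace.single (ι (par v.1)) (1 : ℝ)
      - φ v.1 (par v.1) • EuclideanSpace.single (ι v.1) (1 : ℝ) := funext he
  subst hV hb hf
  constructor
  · refine hu.orthogonal_span_edges_inf_span_eq hdep (w := fun v => φ (par v) v)
      (fun v => inv_ne_zero (hΦ_ne v)) fun v hv => ?_
    rw [hΦ v hv]
    field_simp [hΦ_ne (par v), hφnz (par v) v]
  · refine hu.orthogonal_span_edges_inf_span_eq hdep (w := fun v => φ v (par v)) hΦ_ne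
      fun v hv => ?_
    rw [hφinv, hΦ v hv]
    field_simp [hφnz (par v) v]

/-- Let `H` be a tree with `m` edges embedded (via an injection `ι`) in the
vertex set `Fin n`, rooted at `r`, with connection `φ`, and let `V ⊆ ℝ^n` be the span of the
basis vectors corresponding to the vertices of `H`. Let `Φ v` be the product of `φ` along the
path from the root to `v`, and set `b = ∑_v (Φ v)⁻¹ • u_{ι v}`, `f = ∑_v (Φ v) • u_{ι v}`
(so that the coefficients are the path products `φ_{Λ(v,r)}`, resp. `φ_{Λ(r,v)}`). Then the
orthogonal complement within `V` of the span of the `α`-vectors of the edges is spanned by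
`b`, and that of the span of the `e`-vectors is spanned by `f`. -/
theorem tree_orthogonal_complement (n m : ℕ) (ι : Fin (m + 1) → Fin n)
    (hι : Function.Injective ι)
    (r : Fin (m + 1)) (par : Fin (m + 1) → Fin (m + 1)) (dep : Fin (m + 1) → ℕ)
    (hroot : par r = r) (hdep : ∀ v, v ≠ r → dep v = dep (par v) + 1)
    (φ : Fin (m + 1) → Fin (m + 1) → ℝ)
    (hφnz : ∀ i j, φ i j ≠ 0) (hφinv : ∀ i j, φ j i = (φ i j)⁻¹)
    (Φ : Fin (m + 1) → ℝ) (hΦr : Φ r = 1) (hΦ : ∀ v, v ≠ r → Φ v = Φ (par v) * φ (par v) v)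
    (V : Submodule ℝ (EuclideanSpace ℝ (Fin n)))
    (hV : V = Submodule.span ℝ (Set.range fun v : Fin (m + 1) =>
      EuclideanSpace.single (ι v) (1 : ℝ)))
    (α e : {v : Fin (m + 1) // v ≠ r} → EuclideanSpace ℝ (Fin n))
    (hα : ∀ v, α v = EuclideanSpace.single (ι (par v.1)) (1 : ℝ)
      - φ (par v.1) v.1 • EuclideanSpace.single (ι v.1) (1 : ℝ))
    (he : ∀ v, e v = EuclideanSpace.single (ι (par v.1)) (1 : ℝ)
      - φ v.1 (par v.1) • EuclideanSpace.single (ι v.1) (1 : ℝ))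
    (b f : EuclideanSpace ℝ (Fin n))
    (hb : b = ∑ v : Fin (m + 1), (Φ v)⁻¹ • EuclideanSpace.single (ι v) (1 : ℝ))
    (hf : f = ∑ v : Fin (m + 1), (Φ v) • EuclideanSpace.single (ι v) (1 : ℝ)) :
    (Submodule.span ℝ (Set.range α))ᗮ ⊓ V = Submodule.span ℝ {b}
      ∧ (Submodule.span ℝ (Set.range e))ᗮ ⊓ V = Submodule.span ℝ {f} :=
  tree_orthogonal_complement_general n m ι hι r par dep hdep φ hφnz hφinv Φ hΦr hΦ V hV α e hα he b
    f hb hf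
end

section
/- Let σ_{pq} denote the linear map on R^n that swaps the p-th and q-th coordinates (a reflection), and let c_{pq} ≥ 0 be weights for 1 ≤ p < q ≤ n. Let M = ∑_{p<q} c_{pq}(I − σ_{pq}). Then for each k, the coefficient μ_k = Tr(M^{∧k}) (so that char_M(t) = ∑_k (−1)^k μ_k t^{n−k}) equals ∑_{F} ∏_{(p,q) edge of F} c_{pq} · ∏_{i=1}^{n−k}(m_i + 1), where F ranges over all forests on vertex set {1,...,n} with k edges (hence n−k connected components) and m_i is the number of edges of the i-th component. In particular det M = 0. -/
/-!
Write `M = W D Wᵀ`, where `D = diag (c_e)` and `W` is an oriented incidence matrix of the complete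
graph: the column of the edge `{p, q}` is `±(e_p - e_q)`. By Cauchy–Binet, the principal minor of
`M` on the rows `s` is `∑_T c^T det (W[s, T])²` over the edge sets `T` with `|T| = |s|`. If `T`
contains a cycle, the columns of `W[s, T]` are linearly dependent. If `T` is a forest, removing
a pendant edge shows that `det (W[s, T])² = 1` when the complement of `s` contains exactly one
vertex of every component of `T`, and `0` otherwise. Such sets `s` correspond to choices of one
vertex in each component, so there are `∏ |K| = ∏ (m_K + 1)` of them. Finally `M 𝟙 = 0`, hence
`det M = 0`.
-/

open Finset SimpleGraph Matrix
open scoped Classical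

namespace Matrix

section Gram

variable {m n R : Type*} [Fintype m] [Fintype n] [DecidableEq n] [CommRing R]

/-- Stands in for `(det A)²` when `A` is square but its rows and columns are indexed by different
types, see `gramDet_eq_det_sq`. -/
def gramDet (A : Matrix m n R) : R := (Aᵀ * A).det

theorem gramDet_submatrix_equiv {m' n' : Type*} [Fintype m'] [Fintype n'] [DecidableEq n']
    (A : Matrix m n R) (e : m' ≃ m) (f : n' ≃ n) : (A.submatrix e f).gramDet = A.gramDet := by
  rw [gramDet, gramDet, transpose_submatrix, submatrix_mul_equiv, det_submatrix_equiv_self]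

theorem gramDet_eq_zero_of_col_eq_zero (A : Matrix m n R) (j : n) (h : ∀ i, A i j = 0) :
    A.gramDet = 0 :=
  det_eq_zero_of_column_eq_zero j fun i => by simp [mul_apply, h]

theorem gramDet_eq_zero_of_mulVec_eq_zero [IsDomain R] (A : Matrix m n R) {g : n → R}
    (hg : g ≠ 0) (h : A *ᵥ g = 0) : A.gramDet = 0 :=
  exists_mulVec_eq_zero_iff.mp ⟨g, hg, by rw [← mulVec_mulVec, h, mulVec_zero]⟩

variable [DecidableEq m]

theorem gramDet_eq_det_sq (A : Matrix m n R) (e : m ≃ n) :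
    A.gramDet = (A.submatrix id e).det ^ 2 := by
  rw [← gramDet_submatrix_equiv A (Equiv.refl m) e, gramDet, det_mul, det_transpose, sq]
  rfl

theorem gramDet_transpose (A : Matrix m n R) (e : m ≃ n) : Aᵀ.gramDet = A.gramDet := by
  rw [gramDet_eq_det_sq Aᵀ e.symm, gramDet_eq_det_sq A e, ← transpose_submatrix, det_transpose,
    ← det_submatrix_equiv_self e.symm, submatrix_submatrix, Function.id_comp,
    Equiv.self_comp_symm]

theorem det_option_of_row_eq_zero (B : Matrix (Option m) (Option m) R)
    (h : ∀ j, B none (some j) = 0) : B.det = B none none * (B.submatrix some some).det := by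
  rw [← det_reindex_self (Equiv.optionEquivSumPUnit.{0} m)]
  have : reindex (Equiv.optionEquivSumPUnit m) (Equiv.optionEquivSumPUnit m) B =
      fromBlocks (B.submatrix some some) (of fun i _ => B (some i) none) 0
        (of fun _ _ => B none none) := by
    ext (i | i) (j | j) <;> simp [h]
  rw [this, det_fromBlocks_zero₂₁, det_unique (n := PUnit), mul_comm]
  rfl

theorem gramDet_option_of_row_eq_zero (A : Matrix (Option m) (Option n) R)
    (hmn : Fintype.card m = Fintype.card n) (h : ∀ j, A none (some j) = 0) :
    A.gramDet = A none none ^ 2 * (A.submatrix some some).gramDet := by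
  let e := Fintype.equivOfCardEq hmn
  rw [gramDet_eq_det_sq A (Equiv.optionCongr e), gramDet_eq_det_sq _ e,
    det_option_of_row_eq_zero _ fun j => h (e j)]
  simp only [submatrix_apply, id, Equiv.optionCongr_apply, Option.map_none, mul_pow]
  rfl

theorem gramDet_option_of_col_eq_zero (A : Matrix (Option m) (Option n) R)
    (hmn : Fintype.card m = Fintype.card n) (h : ∀ i, A (some i) none = 0) :
    A.gramDet = A none none ^ 2 * (A.submatrix some some).gramDet := by
  let e := Fintype.equivOfCardEq hmn
  rw [← gramDet_transpose A (Equiv.optionCongr e), gramDet_option_of_row_eq_zero Aᵀ hmn.symm h,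
    ← gramDet_transpose _ e]
  rfl

end Gram

section Finset

variable {α β R : Type*} [DecidableEq α] [DecidableEq β] [CommRing R]

theorem gramDet_submatrix_insert_of_row_eq_zero (A : Matrix α β R) {s : Finset α}
    {t : Finset β} {a : α} {b : β} (ha : a ∉ s) (hb : b ∉ t) (hst : #s = #t)
    (h : ∀ j ∈ t, A a j = 0) :
    (A.submatrix ((↑) : ↥(insert a s) → α) ((↑) : ↥(insert b t) → β)).gramDet =
      A a b ^ 2 * (A.submatrix ((↑) : s → α) ((↑) : t → β)).gramDet := by
  rw [← gramDet_submatrix_equiv _ (subtypeInsertEquivOption ha).symm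
    (subtypeInsertEquivOption hb).symm]
  exact gramDet_option_of_row_eq_zero _ (by simpa using hst) fun j => h j j.2

theorem gramDet_submatrix_insert_of_col_eq_zero (A : Matrix α β R) {s : Finset α}
    {t : Finset β} {a : α} {b : β} (ha : a ∉ s) (hb : b ∉ t) (hst : #s = #t)
    (h : ∀ i ∈ s, A i b = 0) :
    (A.submatrix ((↑) : ↥(insert a s) → α) ((↑) : ↥(insert b t) → β)).gramDet =
      A a b ^ 2 * (A.submatrix ((↑) : s → α) ((↑) : t → β)).gramDet := by
  rw [← gramDet_submatrix_equiv _ (subtypeInsertEquivOption ha).symm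
    (subtypeInsertEquivOption hb).symm]
  exact gramDet_option_of_col_eq_zero _ (by simpa using hst) fun i => h i i.2

omit [DecidableEq α] in
theorem gramDet_submatrix_eq_zero_of_not_linearIndependent [IsDomain R] (A : Matrix α β R)
    (s : Finset α) {t : Finset β} (h : ¬ LinearIndependent R fun j : t => Aᵀ j) :
    (A.submatrix ((↑) : s → α) ((↑) : t → β)).gramDet = 0 := by
  obtain ⟨g, hg, j, hj⟩ := Fintype.not_linearIndependent_iff.mp h
  refine gramDet_eq_zero_of_mulVec_eq_zero _ (fun h0 => hj (congrFun h0 j)) ?_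
  ext i
  simpa [mulVec, dotProduct, mul_comm] using congrFun hg i

end Finset

section CauchyBinet

variable {m ι R : Type*} [Fintype m] [DecidableEq m] [Fintype ι] [CommRing R]

theorem det_mul_eq_sum_prod_mul_det_submatrix (X : Matrix m ι R) (Y : Matrix ι m R) :
    (X * Y).det = ∑ f : m → ι, (∏ i, X i (f i)) * (Y.submatrix f id).det := by
  have hrows : X * Y = of fun i => ∑ j, X i j • Y j := by
    ext i k
    simp [mul_apply]
  calc (X * Y).det
      = (detRowAlternating (R := R) (n := m)).toMultilinearMap fun i => ∑ j, X i j • Y j := by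
        rw [hrows]; rfl
    _ = _ := by
        rw [MultilinearMap.map_sum]
        refine Finset.sum_congr rfl fun f _ => ?_
        rw [MultilinearMap.map_smul_univ]
        rfl

theorem det_mul_diagonal_mul_transpose_of_card_eq {n : Type*} [Fintype n] [DecidableEq n]
    (A : Matrix m n R) (d : n → R) (hmn : Fintype.card m = Fintype.card n) :
    (A * diagonal d * Aᵀ).det = (∏ j, d j) * A.gramDet := by
  let e := Fintype.equivOfCardEq hmn
  have : A * diagonal d * Aᵀ = A.submatrix id e * diagonal (d ∘ e) * (A.submatrix id e)ᵀ := by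
    rw [← submatrix_diagonal_equiv, transpose_submatrix, submatrix_mul_equiv, submatrix_mul_equiv]
    rfl
  rw [this, det_mul, det_mul, det_diagonal, det_transpose, gramDet_eq_det_sq A e]
  simp only [Function.comp_apply, Equiv.prod_comp e d]
  ring

omit [Fintype ι] in
theorem prod_mul_gramDet_submatrix_eq_sum_piFinset [DecidableEq ι] (A : Matrix m ι R)
    (d : ι → R) {t : Finset ι} (ht : #t = Fintype.card m) :
    (∏ j ∈ t, d j) * (A.submatrix id ((↑) : t → ι)).gramDet =
      ∑ f ∈ Fintype.piFinset fun _ => t,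
        (∏ i, A i (f i) * d (f i)) * (Aᵀ.submatrix f id).det := by
  rw [← Finset.prod_coe_sort, ← det_mul_diagonal_mul_transpose_of_card_eq _ _
    (by simpa using ht.symm), det_mul_eq_sum_prod_mul_det_submatrix]
  refine Finset.sum_bij (fun g _ i => (g i : ι)) (by simp) ?_ ?_ (fun g _ => ?_)
  · intro g₁ _ g₂ _ h
    funext i
    exact Subtype.ext (congrFun h i)
  · intro f hf
    exact ⟨fun i => ⟨f i, Fintype.mem_piFinset.mp hf i⟩, mem_univ _, rfl⟩
  · simp only [mul_diagonal]
    rfl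

theorem det_mul_diagonal_mul_transpose [DecidableEq ι] (A : Matrix m ι R) (d : ι → R) :
    (A * diagonal d * Aᵀ).det = ∑ t ∈ powersetCard (Fintype.card m) univ,
      (∏ j ∈ t, d j) * (A.submatrix id ((↑) : t → ι)).gramDet := by
  set F : (m → ι) → R := fun f => (∏ i, A i (f i) * d (f i)) * (Aᵀ.submatrix f id).det
  have hF : ∀ f, ¬ Function.Injective f → F f = 0 := by
    intro f hf
    obtain ⟨i, j, hij, hne⟩ : ∃ i j, f i = f j ∧ i ≠ j := by
      simpa [Function.Injective] using hf
    have hrow : (Aᵀ.submatrix f id) i = (Aᵀ.submatrix f id) j := by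
      ext k; rw [submatrix_apply, submatrix_apply, hij]
    simp only [F, det_zero_of_row_eq hne hrow, mul_zero]
  have hsquare : ∀ t ∈ powersetCard (Fintype.card m) univ,
      (∏ j ∈ t, d j) * (A.submatrix id ((↑) : t → ι)).gramDet =
        ∑ f ∈ Fintype.piFinset fun _ => t, F f := fun t ht =>
    prod_mul_gramDet_submatrix_eq_sum_piFinset A d (mem_powersetCard.mp ht).2
  -- An injective `f` has its range in exactly one `t`; the other `f` contribute `0`.
  rw [Finset.sum_congr rfl hsquare, Finset.sum_comm' (t' := univ)
    (s' := fun f => (powersetCard (Fintype.card m) univ).filter fun t => ∀ i, f i ∈ t)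
    (by intros; simp [and_comm]), det_mul_eq_sum_prod_mul_det_submatrix]
  refine Finset.sum_congr rfl fun f _ => ?_
  simp only [mul_diagonal, sum_const]
  change F f = _ • F f
  by_cases hf : Function.Injective f
  · suffices h : (powersetCard (Fintype.card m) univ).filter (fun t => ∀ i, f i ∈ t) =
        {univ.image f} by rw [h, card_singleton, one_smul]
    ext t
    simp only [mem_filter, mem_powersetCard, subset_univ, true_and, mem_singleton]
    constructor
    · rintro ⟨hcard, hft⟩
      refine (eq_of_subset_of_card_le (fun j hj => ?_) ?_).symm
      · obtain ⟨i, -, rfl⟩ := mem_image.mp hj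
        exact hft i
      · rw [hcard, card_image_of_injective _ hf, card_univ]
    · rintro rfl
      exact ⟨by rw [card_image_of_injective _ hf, card_univ],
        fun i => mem_image_of_mem f (mem_univ i)⟩
  · rw [hF f hf, smul_zero]

end CauchyBinet

end Matrix

section OrientedIncidence

variable {R V : Type*} [CommRing R] [DecidableEq V]

variable (R V) in
/-- Each edge is oriented by the arbitrary representative `Quot.out e`; nothing below depends on
this choice. -/
noncomputable def orientedIncMatrix : Matrix V (Sym2 V) R :=
  of fun x e => (Pi.single (Quot.out e).1 1 - Pi.single (Quot.out e).2 1 : V → R) x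

theorem transpose_orientedIncMatrix_mk (a b : V) :
    ∃ ε : R, ε * ε = 1 ∧
      (orientedIncMatrix R V)ᵀ s(a, b) = ε • (Pi.single a 1 - Pi.single b 1) := by
  have h : s((Quot.out s(a, b)).1, (Quot.out s(a, b)).2) = s(a, b) := Quot.out_eq _
  rcases Sym2.eq_iff.mp h with ⟨h₁, h₂⟩ | ⟨h₁, h₂⟩
  · exact ⟨1, one_mul 1, by ext x; simp [orientedIncMatrix, h₁, h₂]⟩
  · exact ⟨-1, by ring, by ext x; simp [orientedIncMatrix, h₁, h₂]⟩

theorem orientedIncMatrix_apply_mk (a b x : V) :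
    ∃ ε : R, ε * ε = 1 ∧ orientedIncMatrix R V x s(a, b) =
      ε * ((if x = a then 1 else 0) - if x = b then 1 else 0) := by
  obtain ⟨ε, hε, h⟩ := transpose_orientedIncMatrix_mk (R := R) a b
  refine ⟨ε, hε, ?_⟩
  rw [← transpose_apply (orientedIncMatrix R V), h]
  simp [Pi.single_apply]

theorem orientedIncMatrix_apply_eq_zero {x : V} {e : Sym2 V} (hx : x ∉ e) :
    orientedIncMatrix R V x e = 0 := by
  induction e using Sym2.inductionOn with
  | hf a b =>
    obtain ⟨ε, -, h⟩ := orientedIncMatrix_apply_mk (R := R) a b x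
    simp only [Sym2.mem_iff, not_or] at hx
    simp [h, hx.1, hx.2]

theorem orientedIncMatrix_apply_mk_sq {a b : V} (hab : a ≠ b) :
    orientedIncMatrix R V a s(a, b) ^ 2 = 1 := by
  obtain ⟨ε, hε, h⟩ := orientedIncMatrix_apply_mk (R := R) a b a
  simp [h, hab, sq, hε]

theorem orientedIncMatrix_mul_apply_mk (a b x y : V) :
    orientedIncMatrix R V x s(a, b) * orientedIncMatrix R V y s(a, b) =
      ((if x = a then 1 else 0) - if x = b then 1 else 0) *
        ((if y = a then 1 else 0) - if y = b then 1 else 0) := by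
  obtain ⟨ε, hε, h⟩ := transpose_orientedIncMatrix_mk (R := R) a b
  change (orientedIncMatrix R V)ᵀ s(a, b) x * (orientedIncMatrix R V)ᵀ s(a, b) y = _
  rw [h]
  simp only [Pi.smul_apply, Pi.sub_apply, Pi.single_apply, smul_eq_mul]
  linear_combination (((if x = a then 1 else 0) - if x = b then 1 else 0) *
    ((if y = a then 1 else 0) - if y = b then 1 else 0) : R) * hε

theorem single_sub_single_mem_span_of_walk {S : Set (Sym2 V)} {a b : V}
    (p : (fromEdgeSet S).Walk a b) :
    (Pi.single a 1 - Pi.single b 1 : V → R) ∈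
      Submodule.span R ((orientedIncMatrix R V)ᵀ '' S) := by
  induction p with
  | nil => simp
  | @cons a c b h p ih =>
    obtain ⟨ε, hε, hw⟩ := transpose_orientedIncMatrix_mk (R := R) a c
    have hac : (Pi.single a 1 - Pi.single c 1 : V → R) =
        ε • (orientedIncMatrix R V)ᵀ s(a, c) := by
      rw [hw, smul_smul, hε, one_smul]
    have hmem := Submodule.subset_span (R := R)
      (Set.mem_image_of_mem (orientedIncMatrix R V)ᵀ ((fromEdgeSet_adj _).mp h).1)
    have := Submodule.add_mem _ (Submodule.smul_mem _ ε hmem) ih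
    rwa [← hac, sub_add_sub_cancel] at this

theorem one_sub_swap_apply {p q : V} (hpq : p ≠ q) (x y : V) :
    (1 - of fun i j => if j = Equiv.swap p q i then (1 : R) else 0 : Matrix V V R) x y =
      ((if x = p then 1 else 0) - if x = q then 1 else 0) *
        ((if y = p then 1 else 0) - if y = q then 1 else 0) := by
  simp only [Matrix.sub_apply, one_apply, of_apply, Equiv.swap_apply_def]
  by_cases hxp : x = p <;> by_cases hxq : x = q <;> by_cases hyp : y = p <;>
    by_cases hyq : y = q <;> simp_all [eq_comm]

variable [Fintype V]

theorem orientedIncMatrix_mul_diagonal_mul_transpose [LinearOrder V] (c : V → V → R)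
    (hsym : ∀ p q, c p q = c q p) :
    orientedIncMatrix R V * diagonal (Sym2.lift ⟨c, hsym⟩) * (orientedIncMatrix R V)ᵀ =
      ∑ p, ∑ q, if p < q then
        c p q • (1 - of fun i j => if j = Equiv.swap p q i then (1 : R) else 0) else 0 := by
  ext x y
  simp only [mul_apply, diagonal_apply, mul_ite, mul_zero, sum_ite_eq', mem_univ, if_true,
    transpose_apply, Matrix.sum_apply, apply_ite (fun A : Matrix V V R => A x y),
    Matrix.smul_apply, smul_eq_mul, Matrix.zero_apply]
  have hdiag : ∀ e : Sym2 V, e.IsDiag → orientedIncMatrix R V x e = 0 := by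
    intro e he
    induction e using Sym2.inductionOn with
    | hf a b =>
      obtain rfl := Sym2.mk_isDiag_iff.mp he
      obtain ⟨ε, -, h⟩ := orientedIncMatrix_apply_mk (R := R) a a x
      rw [h, sub_self, mul_zero]
  set f : Sym2 V → R := fun e =>
    orientedIncMatrix R V x e * Sym2.lift ⟨c, hsym⟩ e * orientedIncMatrix R V y e
  calc ∑ e, f e = ∑ e ∈ univ.sym2 with ¬ e.IsDiag, f e := by
        rw [sym2_univ, sum_filter]
        refine sum_congr rfl fun e _ => ?_
        split_ifs with he
        · simp only [f, hdiag e he, zero_mul]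
        · rfl
    _ = ∑ i ∈ univ.offDiag with i.1 < i.2, f s(i.1, i.2) := by
        convert sum_sym2_filter_not_isDiag (univ : Finset V) f
    _ = ∑ i ∈ univ ×ˢ univ, if i.1 < i.2 then f s(i.1, i.2) else 0 := by
        rw [sum_filter]
        refine sum_subset (fun i hi => by simp) fun i _ hi => ?_
        rw [if_neg]
        simp_all
    _ = _ := by
        rw [sum_product]
        refine sum_congr rfl fun p _ => sum_congr rfl fun q _ => ?_
        split_ifs with hpq
        · simp only [f, Sym2.lift_mk]
          rw [mul_right_comm, orientedIncMatrix_mul_apply_mk, one_sub_swap_apply hpq.ne, mul_comm]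
        · rfl

theorem det_orientedIncMatrix_mul_diagonal_mul_transpose [IsDomain R] [Nonempty V]
    (d : Sym2 V → R) :
    (orientedIncMatrix R V * diagonal d * (orientedIncMatrix R V)ᵀ).det = 0 := by
  refine exists_mulVec_eq_zero_iff.mp ⟨fun _ => 1, fun h => one_ne_zero (congrFun h
    (Classical.arbitrary V)), ?_⟩
  have : (orientedIncMatrix R V)ᵀ *ᵥ (fun _ => 1) = 0 := by
    ext e
    simp [mulVec, dotProduct, orientedIncMatrix, sum_sub_distrib]
  rw [← mulVec_mulVec, this, mulVec_zero]

end OrientedIncidence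

namespace SimpleGraph

variable {V : Type*}

theorem IsAcyclic.exists_adj_forall_adj_eq [Finite V] {G : SimpleGraph V} (hG : G.IsAcyclic)
    {a b : V} (hab : G.Adj a b) : ∃ v u, G.Adj v u ∧ ∀ w, G.Adj v w → w = u := by
  have : Nonempty V := ⟨a⟩
  obtain ⟨v, v', p, hp, hmax⟩ := Walk.exists_isPath_forall_isPath_length_le_length G
  have hnil : ¬ p.Nil := by
    intro h
    have := hmax a b (Walk.cons hab .nil) (by simp [hab.ne])
    simp [Walk.length_eq_zero_iff.mpr h] at this
  refine ⟨v, p.snd, p.adj_snd hnil, fun w hw => ?_⟩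
  by_cases hws : w ∈ p.support
  · exact hG.eq_snd_of_adj_start hp hw hws
  · have := hmax w _ (Walk.cons hw.symm p) ((Walk.cons_isPath_iff _ _).mpr ⟨hp, hws⟩)
    simp at this

theorem IsAcyclic.exists_pendant_edge [Finite V] {T : Finset (Sym2 V)}
    (hT : ∀ e ∈ T, ¬ e.IsDiag) (hac : (fromEdgeSet (T : Set (Sym2 V))).IsAcyclic)
    (hne : T.Nonempty) : ∃ u v, u ≠ v ∧ s(v, u) ∈ T ∧ ∀ f ∈ T, v ∈ f → f = s(v, u) := by
  obtain ⟨e, he⟩ := hne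
  induction e using Sym2.inductionOn with
  | hf a b =>
  obtain ⟨v, u, hadj, hleaf⟩ := hac.exists_adj_forall_adj_eq
    ((fromEdgeSet_adj _).mpr ⟨he, fun hab => hT _ he (Sym2.mk_isDiag_iff.mpr hab)⟩)
  obtain ⟨hvu, hne⟩ := (fromEdgeSet_adj _).mp hadj
  refine ⟨u, v, hne.symm, hvu, fun f hf hvf => ?_⟩
  obtain ⟨w, rfl⟩ := Sym2.mem_iff_exists.mp hvf
  have hvw : v ≠ w := fun h => hT _ hf (Sym2.mk_isDiag_iff.mpr h)
  rw [hleaf w ((fromEdgeSet_adj _).mpr ⟨hf, hvw⟩)]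

theorem Reachable.eq_of_forall_not_adj {G : SimpleGraph V} {v w : V} (hv : ∀ x, ¬ G.Adj v x)
    (h : G.Reachable v w) : w = v := by
  obtain ⟨p⟩ := h
  cases p with
  | nil => rfl
  | cons hadj _ => exact absurd hadj (hv _)

namespace ConnectedComponent

variable {G : SimpleGraph V}

theorem represents_univ_iff {R : Set V} :
    Represents R (Set.univ : Set G.ConnectedComponent) ↔
      ∀ x, ∃! r, r ∈ R ∧ G.Reachable x r := by
  refine ⟨fun h x => ?_, fun h => ⟨fun _ _ => trivial, fun r hr r' hr' hrr' => ?_, fun c _ => ?_⟩⟩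
  · obtain ⟨r, ⟨hr, hrx⟩, hu⟩ := h.existsUnique_rep (c := G.connectedComponentMk x) trivial
    refine ⟨r, ⟨hr, (ConnectedComponent.eq.mp hrx).symm⟩, fun r' hr' => hu r' ⟨hr'.1, ?_⟩⟩
    exact ConnectedComponent.eq.mpr hr'.2.symm
  · obtain ⟨r₀, -, hu⟩ := h r
    exact (hu r ⟨hr, .rfl⟩).trans (hu r' ⟨hr', ConnectedComponent.eq.mp hrr'⟩).symm
  · obtain ⟨x, rfl⟩ := c.exists_rep
    obtain ⟨r, ⟨hr, hxr⟩, -⟩ := h x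
    exact ⟨r, hr, ConnectedComponent.eq.mpr hxr.symm⟩

theorem represents_univ_iff_eq_univ (hG : ∀ x y, ¬ G.Adj x y) {R : Set V} :
    Represents R (Set.univ : Set G.ConnectedComponent) ↔ R = Set.univ := by
  simp only [represents_univ_iff, Set.eq_univ_iff_forall]
  refine forall_congr' fun x => ⟨fun ⟨r, ⟨hr, hxr⟩, _⟩ => ?_, fun hx => ⟨x, ⟨hx, .rfl⟩, ?_⟩⟩
  · rwa [hxr.eq_of_forall_not_adj (hG x)] at hr
  · exact fun r hr => hr.2.eq_of_forall_not_adj (hG x)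

theorem Represents.insert_sdiff_singleton {R : Set V} {C : Set G.ConnectedComponent}
    (h : Represents R C) {a b : V} (ha : a ∈ R) (hab : G.Reachable a b) :
    Represents (insert b (R \ {a})) C := by
  have hmk : G.connectedComponentMk b = G.connectedComponentMk a :=
    ConnectedComponent.eq.mpr hab.symm
  have := (h.sdiff_singleton ha).insert (a := b) (by simp [hmk])
  rwa [hmk, Set.insert_sdiff_singleton, Set.insert_eq_of_mem (h.mapsTo ha)] at this

theorem not_represents_of_reachable {R : Set V} {C : Set G.ConnectedComponent} {a b : V}
    (ha : a ∈ R) (hb : b ∈ R) (hab : G.Reachable a b) (hne : a ≠ b) : ¬ Represents R C :=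
  fun h => hne (h.injOn ha hb (ConnectedComponent.eq.mpr hab))

theorem card_filter_represents_univ [Fintype V] [DecidableEq V] [Fintype G.ConnectedComponent] :
    #{R : Finset V | Represents (↑R) (Set.univ : Set G.ConnectedComponent)} =
      ∏ K : G.ConnectedComponent, Fintype.card K := by
  let Φ : (∀ K : G.ConnectedComponent, K) → Finset V := fun f => univ.image fun K => (f K : V)
  have hmk : ∀ (f : ∀ K : G.ConnectedComponent, K) K, G.connectedComponentMk (f K) = K :=
    fun f K => (f K).2
  have hΦ : Φ.Injective := by
    intro f g hfg
    funext K
    have hfK : (f K : V) ∈ Φ g := hfg ▸ mem_image_of_mem (fun K => (f K : V)) (mem_univ K)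
    obtain ⟨K', -, hK'⟩ := mem_image.mp hfK
    obtain rfl : K' = K := by rw [← hmk g K', hK', hmk f K]
    exact Subtype.ext hK'.symm
  rw [← Fintype.card_pi, ← card_univ, ← card_image_of_injective _ hΦ]
  congr 1
  ext R
  simp only [mem_filter, mem_univ, true_and, mem_image]
  constructor
  · intro h
    choose f hf using fun K : G.ConnectedComponent => h.existsUnique_rep (Set.mem_univ K)
    refine ⟨fun K => ⟨f K, (hf K).1.2⟩, ?_⟩
    ext x
    simp only [Φ, mem_image, mem_univ, true_and]
    refine ⟨?_, fun hx => ⟨_, ((hf _).2 x ⟨hx, rfl⟩).symm⟩⟩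
    rintro ⟨K, rfl⟩
    exact (hf K).1.1
  · rintro ⟨f, rfl⟩
    refine ⟨fun _ _ => trivial, ?_, fun K _ => ⟨f K, by simp [Φ], hmk f K⟩⟩
    rintro _ hx _ hy hxy
    simp only [Φ, coe_image, coe_univ, Set.image_univ, Set.mem_range] at hx hy
    obtain ⟨K, rfl⟩ := hx
    obtain ⟨K', rfl⟩ := hy
    rw [hmk, hmk] at hxy
    rw [hxy]

end ConnectedComponent

theorem IsAcyclic.card_filter_add_one [Fintype V] [DecidableEq V] {T : Finset (Sym2 V)}
    (hT : ∀ e ∈ T, ¬ e.IsDiag) (hac : (fromEdgeSet (T : Set (Sym2 V))).IsAcyclic)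
    (K : (fromEdgeSet (T : Set (Sym2 V))).ConnectedComponent) :
    #{e ∈ T | ∀ v ∈ e, v ∈ K.supp} + 1 = Fintype.card K := by
  rw [← (hac.isTree_connectedComponent K).card_edgeFinset, ConnectedComponent.toSimpleGraph]
  have := congrArg Finset.card (map_edgeFinset_induce (G := fromEdgeSet ↑T) (s := K.supp))
  rw [card_map] at this
  convert congrArg (· + 1) this.symm using 2
  · congr 1
    ext e
    simpa [mem_sym2_iff] using fun _ => hT e
  · congr!

section PendantEdge

variable {G : SimpleGraph V} {u v : V}

theorem reachable_sup_edge_iff (hv : ∀ w, ¬ G.Adj v w) {x y : V} :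
    (G ⊔ edge u v).Reachable x y ↔
      G.Reachable (if x = v then u else x) (if y = v then u else y) := by
  have hcollapse : ∀ z, (G ⊔ edge u v).Reachable z (if z = v then u else z) := by
    intro z
    split_ifs with hz
    · subst hz
      by_cases huz : u = z
      · rw [huz]
      · exact Adj.reachable (Or.inr (by simp [edge_adj, Ne.symm huz]))
    · rfl
  refine ⟨?_, fun h => (hcollapse x).trans ((h.mono le_sup_left).trans (hcollapse y).symm)⟩
  rintro ⟨p⟩
  induction p with
  | nil => rfl
  | @cons a c b h p ih =>
    refine Reachable.trans ?_ ih
    rcases h with h | h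
    · have ha : a ≠ v := fun ha => hv c (ha ▸ h)
      have hc : c ≠ v := fun hc => hv a (hc ▸ h.symm)
      simpa [ha, hc] using h.reachable
    · rw [edge_adj] at h
      rcases h.1 with ⟨rfl, rfl⟩ | ⟨rfl, rfl⟩ <;> simp [h.2, h.2.symm]

theorem represents_sup_edge_iff (hv : ∀ w, ¬ G.Adj v w) (huv : u ≠ v) {R : Set V}
    (hvR : v ∉ R) :
    ConnectedComponent.Represents (G := G ⊔ edge u v) R Set.univ ↔
      ConnectedComponent.Represents (G := G) (insert v R) Set.univ := by
  simp only [ConnectedComponent.represents_univ_iff]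
  have hreach : ∀ {x r}, r ≠ v → ((G ⊔ edge u v).Reachable x r ↔
      G.Reachable (if x = v then u else x) r) := fun hr => by
    rw [reachable_sup_edge_iff hv, if_neg hr]
  have hiso : ∀ {r}, G.Reachable v r → r = v := Reachable.eq_of_forall_not_adj hv
  constructor
  · intro h x
    by_cases hx : x = v
    · subst hx
      exact ⟨x, ⟨Set.mem_insert _ _, .rfl⟩, fun r hr => hiso hr.2⟩
    obtain ⟨r, ⟨hr, hxr⟩, hu⟩ := h x
    have hrv : r ≠ v := fun h => hvR (h ▸ hr)
    refine ⟨r, ⟨Set.mem_insert_of_mem _ hr, by simpa [hx] using (hreach hrv).mp hxr⟩, ?_⟩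
    rintro r' ⟨hr', hxr'⟩
    rcases hr' with rfl | hr'
    · exact absurd (hiso hxr'.symm) hx
    · exact hu r' ⟨hr', hxr'.mono le_sup_left⟩
  · intro h x
    obtain ⟨r, ⟨hr, hxr⟩, hu⟩ := h (if x = v then u else x)
    have hrv : r ≠ v := by
      rintro rfl
      have := hiso hxr.symm
      split_ifs at this with hx
      exacts [huv this, hx this]
    refine ⟨r, ⟨hr.resolve_left hrv, (hreach hrv).mpr hxr⟩, ?_⟩
    rintro r' ⟨hr', hxr'⟩
    exact hu r' ⟨Set.mem_insert_of_mem _ hr', (hreach fun h => hvR (h ▸ hr')).mp hxr'⟩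

theorem represents_compl_insert_right_sup_edge_iff (hv : ∀ w, ¬ G.Adj v w) (huv : u ≠ v)
    {S : Set V} (hvS : v ∉ S) :
    ConnectedComponent.Represents (G := G ⊔ edge u v) (insert v S)ᶜ Set.univ ↔
      ConnectedComponent.Represents (G := G) Sᶜ Set.univ := by
  rw [represents_sup_edge_iff hv huv (by simp)]
  congr! 1
  ext x
  by_cases hxv : x = v <;> simp_all

theorem represents_compl_insert_left_sup_edge_iff (hv : ∀ w, ¬ G.Adj v w) (huv : u ≠ v)
    {S : Set V} (huS : u ∉ S) (hvS : v ∉ S) :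
    ConnectedComponent.Represents (G := G ⊔ edge u v) (insert u S)ᶜ Set.univ ↔
      ConnectedComponent.Represents (G := G) Sᶜ Set.univ := by
  have hvu : (G ⊔ edge u v).Reachable v u :=
    Adj.reachable (Or.inr (by simp [edge_adj, huv, Ne.symm huv]))
  have hswap : (insert u ((insert u S)ᶜ \ {v})) = (insert v S)ᶜ := by
    ext x
    by_cases hxu : x = u <;> by_cases hxv : x = v <;> simp_all
  rw [← represents_compl_insert_right_sup_edge_iff hv huv hvS, ← hswap]
  refine ⟨fun h => h.insert_sdiff_singleton (by simp [Ne.symm huv, hvS]) hvu, fun h => ?_⟩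
  convert h.insert_sdiff_singleton (Set.mem_insert u _) hvu.symm using 1
  ext x
  by_cases hxu : x = u <;> by_cases hxv : x = v <;> simp_all

end PendantEdge

end SimpleGraph

section MatrixForest

variable {R V : Type*} [CommRing R] [DecidableEq V]

theorem not_linearIndependent_orientedIncMatrix [Nontrivial R] {T : Finset (Sym2 V)}
    (hT : (∃ e ∈ T, e.IsDiag) ∨ ¬ (fromEdgeSet (T : Set (Sym2 V))).IsAcyclic) :
    ¬ LinearIndependent R fun e : T => (orientedIncMatrix R V)ᵀ e := by
  intro hli
  rcases hT with ⟨e, he, hdiag⟩ | hcyc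
  · induction e using Sym2.inductionOn with
    | hf a b =>
      obtain rfl := Sym2.mk_isDiag_iff.mp hdiag
      obtain ⟨ε, -, h⟩ := transpose_orientedIncMatrix_mk (R := R) a a
      rw [sub_self, smul_zero] at h
      exact hli.ne_zero ⟨_, he⟩ h
  · obtain ⟨u, v, hadj, hbridge⟩ : ∃ u v, (fromEdgeSet (T : Set (Sym2 V))).Adj u v ∧
        ¬ (fromEdgeSet (T : Set (Sym2 V))).IsBridge s(u, v) := by
      simpa only [isAcyclic_iff_forall_adj_isBridge, not_forall, exists_prop] using hcyc
    rw [isBridge_iff, not_not, deleteEdges, ← fromEdgeSet_sdiff] at hbridge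
    have he : s(u, v) ∈ T := ((fromEdgeSet_adj _).mp hadj).1
    obtain ⟨ε, -, h⟩ := transpose_orientedIncMatrix_mk (R := R) u v
    have hmem : (orientedIncMatrix R V)ᵀ s(u, v) ∈
        Submodule.span R ((orientedIncMatrix R V)ᵀ '' (↑T \ {s(u, v)})) := by
      rw [h]
      exact Submodule.smul_mem _ ε (single_sub_single_mem_span_of_walk hbridge.some)
    refine hli.notMem_span_image (s := {⟨s(u, v), he⟩}ᶜ) (x := ⟨s(u, v), he⟩) (by simp)
      (Submodule.span_mono ?_ hmem)
    rintro _ ⟨f, ⟨hfT, hf⟩, rfl⟩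
    exact ⟨⟨f, hfT⟩, by simpa using hf, rfl⟩

theorem gramDet_orientedIncMatrix_eq_zero_of_notMem {T : Finset (Sym2 V)} {s : Finset V} {a b : V}
    (he : s(a, b) ∈ T) (ha : a ∉ s) (hb : b ∉ s) :
    ((orientedIncMatrix R V).submatrix ((↑) : s → V) ((↑) : T → Sym2 V)).gramDet = 0 := by
  refine gramDet_eq_zero_of_col_eq_zero _ ⟨s(a, b), he⟩ fun i => ?_
  refine orientedIncMatrix_apply_eq_zero ?_
  rw [Sym2.mem_iff]
  rintro (h | h) <;> simp [← h] at ha hb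

theorem gramDet_orientedIncMatrix_insert_pendant {T : Finset (Sym2 V)} {u v : V} (huv : u ≠ v)
    (he₀ : s(v, u) ∉ T) (hvT : ∀ f ∈ T, v ∉ f)
    (hT : ∀ s : Finset V, (if #s = #T then
      ((orientedIncMatrix R V).submatrix ((↑) : s → V) ((↑) : T → Sym2 V)).gramDet else 0) =
      if ConnectedComponent.Represents (G := fromEdgeSet (T : Set (Sym2 V))) (↑s)ᶜ Set.univ
      then 1 else 0)
    (s : Finset V) :
    (if #s = #(insert s(v, u) T) then ((orientedIncMatrix R V).submatrix ((↑) : s → V)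
      ((↑) : ↥(insert s(v, u) T) → Sym2 V)).gramDet else 0) =
      if ConnectedComponent.Represents (G := fromEdgeSet (T : Set (Sym2 V)) ⊔ edge u v)
        (↑s)ᶜ Set.univ then 1 else 0 := by
  have hiso : ∀ w, ¬ (fromEdgeSet (T : Set (Sym2 V))).Adj v w := fun w h =>
    hvT _ ((fromEdgeSet_adj _).mp h).1 (Sym2.mem_mk_left v w)
  have hite : ∀ {x : V} {s' : Finset V} {g g' : R}, x ∉ s' → (#s' = #T → g = g') →
      (if #(insert x s') = #(insert s(v, u) T) then g else 0) = if #s' = #T then g' else 0 := by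
    intro x s' g g' hx hg
    simp only [card_insert_of_notMem hx, card_insert_of_notMem he₀, add_left_inj]
    split_ifs with h
    exacts [hg h, rfl]
  by_cases hvs : v ∈ s
  · obtain ⟨s', hvs', rfl⟩ : ∃ s', v ∉ s' ∧ s = insert v s' :=
      ⟨s.erase v, notMem_erase _ _, (insert_erase hvs).symm⟩
    rw [coe_insert, represents_compl_insert_right_sup_edge_iff hiso huv (by simpa using hvs'),
      ← hT s']
    refine hite hvs' fun h => ?_
    rw [gramDet_submatrix_insert_of_row_eq_zero _ hvs' he₀ h
      (fun f hf => orientedIncMatrix_apply_eq_zero (hvT f hf)),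
      orientedIncMatrix_apply_mk_sq huv.symm, one_mul]
  by_cases hus : u ∈ s
  · obtain ⟨s', hus', rfl⟩ : ∃ s', u ∉ s' ∧ s = insert u s' :=
      ⟨s.erase u, notMem_erase _ _, (insert_erase hus).symm⟩
    have hvs' : v ∉ s' := fun h => hvs (mem_insert_of_mem h)
    rw [coe_insert, represents_compl_insert_left_sup_edge_iff hiso huv (by simpa using hus')
      (by simpa using hvs'), ← hT s']
    refine hite hus' fun h => ?_
    rw [gramDet_submatrix_insert_of_col_eq_zero _ hus' he₀ h
      (fun i hi => orientedIncMatrix_apply_eq_zero ?_), Sym2.eq_swap,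
      orientedIncMatrix_apply_mk_sq huv, one_mul]
    rw [Sym2.mem_iff]
    rintro (rfl | rfl)
    exacts [hvs' hi, hus' hi]
  · have hreach : (fromEdgeSet (T : Set (Sym2 V)) ⊔ edge u v).Reachable u v :=
      Adj.reachable (Or.inr (by simp [edge_adj, huv]))
    rw [if_neg (ConnectedComponent.not_represents_of_reachable (by simpa using hus)
      (by simpa using hvs) hreach huv),
      gramDet_orientedIncMatrix_eq_zero_of_notMem (mem_insert_self _ _) hvs hus, ite_self]

variable [Fintype V]

/-- The left side vanishes unless `#s = #T`, so this also says that `(↑s)ᶜ` can represent the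
components of a forest only when `#s = #T`. -/
theorem gramDet_orientedIncMatrix_of_isAcyclic (T : Finset (Sym2 V)) (hT : ∀ e ∈ T, ¬ e.IsDiag)
    (hac : (fromEdgeSet (T : Set (Sym2 V))).IsAcyclic) (s : Finset V) :
    (if #s = #T then
      ((orientedIncMatrix R V).submatrix ((↑) : s → V) ((↑) : T → Sym2 V)).gramDet else 0) =
      if ConnectedComponent.Represents (G := fromEdgeSet (T : Set (Sym2 V))) (↑s)ᶜ Set.univ
      then 1 else 0 := by
  induction T using Finset.strongInduction generalizing s with
  | H T ih =>
  rcases T.eq_empty_or_nonempty with rfl | hne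
  · rw [ConnectedComponent.represents_univ_iff_eq_univ (by simp), Set.compl_univ_iff,
      coe_eq_empty, card_empty]
    simp only [card_eq_zero]
    split_ifs with hs
    · subst hs
      exact det_isEmpty
    · rfl
  obtain ⟨u, v, huv, hvuT, hleaf⟩ := hac.exists_pendant_edge hT hne
  obtain ⟨T', he₀, rfl⟩ : ∃ T', s(v, u) ∉ T' ∧ T = insert s(v, u) T' :=
    ⟨T.erase _, notMem_erase _ _, (insert_erase hvuT).symm⟩
  have hG : fromEdgeSet (↑(insert s(v, u) T') : Set (Sym2 V)) =
      fromEdgeSet (T' : Set (Sym2 V)) ⊔ edge u v := by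
    rw [coe_insert, Set.insert_eq, fromEdgeSet_union, sup_comm, edge, Sym2.eq_swap]
  rw [hG]
  refine gramDet_orientedIncMatrix_insert_pendant huv he₀
    (fun f hf hvf => he₀ (hleaf f (mem_insert_of_mem hf) hvf ▸ hf))
    (ih T' (ssubset_insert he₀) (fun f hf => hT f (mem_insert_of_mem hf))
      (hac.anti (fromEdgeSet_mono (by simp)))) s

theorem sum_gramDet_orientedIncMatrix [IsDomain R] (T : Finset (Sym2 V)) :
    ∑ s ∈ powersetCard #T (univ : Finset V),
      ((orientedIncMatrix R V).submatrix ((↑) : s → V) ((↑) : T → Sym2 V)).gramDet =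
      if (∀ e ∈ T, ¬ e.IsDiag) ∧ (fromEdgeSet (T : Set (Sym2 V))).IsAcyclic then
        ∏ K : (fromEdgeSet (T : Set (Sym2 V))).ConnectedComponent,
          ((#{e ∈ T | ∀ v ∈ e, v ∈ K.supp} + 1 : ℕ) : R)
      else 0 := by
  split_ifs with h
  · rw [powersetCard_eq_filter, powerset_univ, sum_filter, Finset.sum_congr rfl fun s _ =>
      gramDet_orientedIncMatrix_of_isAcyclic T h.1 h.2 s, sum_boole]
    simp_rw [IsAcyclic.card_filter_add_one h.1 h.2]
    rw [← Nat.cast_prod, ← ConnectedComponent.card_filter_represents_univ]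
    congr 1
    refine card_bij' (fun s _ => sᶜ) (fun R _ => Rᶜ) ?_ ?_ (fun _ _ => compl_compl _)
      (fun _ _ => compl_compl _) <;> simp
  · refine sum_eq_zero fun s _ => gramDet_submatrix_eq_zero_of_not_linearIndependent _ _ ?_
    exact not_linearIndependent_orientedIncMatrix
      (by simpa only [not_and_or, not_forall, not_not, exists_prop] using h)

theorem sum_det_submatrix_orientedIncMatrix_mul_diagonal_mul_transpose [IsDomain R]
    (d : Sym2 V → R) (k : ℕ) :
    ∑ s ∈ powersetCard k (univ : Finset V),
      ((orientedIncMatrix R V * diagonal d * (orientedIncMatrix R V)ᵀ).submatrix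
        ((↑) : s → V) (↑)).det =
      ∑ T ∈ powersetCard k (univ : Finset (Sym2 V)),
        if (∀ e ∈ T, ¬ e.IsDiag) ∧ (fromEdgeSet (T : Set (Sym2 V))).IsAcyclic then
          (∏ e ∈ T, d e) * ∏ K : (fromEdgeSet (T : Set (Sym2 V))).ConnectedComponent,
            ((#{e ∈ T | ∀ v ∈ e, v ∈ K.supp} + 1 : ℕ) : R)
        else 0 := by
  have hminor : ∀ s ∈ powersetCard k (univ : Finset V),
      ((orientedIncMatrix R V * diagonal d * (orientedIncMatrix R V)ᵀ).submatrix
        ((↑) : s → V) (↑)).det =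
        ∑ T ∈ powersetCard k univ, (∏ e ∈ T, d e) *
          ((orientedIncMatrix R V).submatrix ((↑) : s → V) ((↑) : T → Sym2 V)).gramDet := by
    intro s hs
    rw [submatrix_mul _ _ _ id _ Function.bijective_id,
      submatrix_mul _ _ _ id _ Function.bijective_id, submatrix_id_id, ← transpose_submatrix,
      det_mul_diagonal_mul_transpose, Fintype.card_coe, mem_powersetCard_univ.mp hs]
    rfl
  rw [sum_congr rfl hminor, sum_comm]
  refine sum_congr rfl fun T hT => ?_
  rw [← mul_sum, ← mem_powersetCard_univ.mp hT, sum_gramDet_orientedIncMatrix, mul_ite, mul_zero]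

end MatrixForest

theorem matrix_forest_A_general (n k : ℕ) (hn : 1 ≤ n)
    (c : Fin n → Fin n → ℝ) (hsym : ∀ p q, c p q = c q p)
    (M : Matrix (Fin n) (Fin n) ℝ)
    (hM : M = ∑ p : Fin n, ∑ q : Fin n, if p < q then
        c p q • ((1 : Matrix (Fin n) (Fin n) ℝ)
          - Matrix.of fun i j => if j = Equiv.swap p q i then (1 : ℝ) else 0)
      else 0) :
    (∑ s : Finset (Fin n), if h : s.card = k then
        (M.submatrix (fun i => (s.orderIsoOfFin h i : Fin n))
          (fun i => (s.orderIsoOfFin h i : Fin n))).det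
      else 0)
      = (∑ F : Finset (Sym2 (Fin n)),
          if (∀ e ∈ F, ¬ e.IsDiag) ∧ F.card = k ∧
              (SimpleGraph.fromEdgeSet (↑F : Set (Sym2 (Fin n)))).IsAcyclic then
            (∏ e ∈ F, Sym2.lift ⟨c, hsym⟩ e) *
              ∏ comp : (SimpleGraph.fromEdgeSet (↑F : Set (Sym2 (Fin n)))).ConnectedComponent,
                (((F.filter fun e => ∀ v ∈ e, v ∈ comp.supp).card + 1 : ℕ) : ℝ)
          else 0)
    ∧ M.det = 0 := by
  rw [← orientedIncMatrix_mul_diagonal_mul_transpose c hsym] at hM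
  subst hM
  have : Nonempty (Fin n) := ⟨⟨0, hn⟩⟩
  refine ⟨?_, det_orientedIncMatrix_mul_diagonal_mul_transpose _⟩
  calc _ = ∑ s ∈ powersetCard k (univ : Finset (Fin n)),
        ((orientedIncMatrix ℝ (Fin n) * diagonal (Sym2.lift ⟨c, hsym⟩) *
          (orientedIncMatrix ℝ (Fin n))ᵀ).submatrix ((↑) : s → Fin n) (↑)).det := by
        rw [powersetCard_eq_filter, powerset_univ, sum_filter]
        refine sum_congr rfl fun s _ => ?_
        split_ifs with h
        · exact det_submatrix_equiv_self (s.orderIsoOfFin h).toEquiv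
            ((orientedIncMatrix ℝ (Fin n) * diagonal (Sym2.lift ⟨c, hsym⟩) *
              (orientedIncMatrix ℝ (Fin n))ᵀ).submatrix ((↑) : s → Fin n) (↑))
        · rfl
    _ = _ := by
        rw [sum_det_submatrix_orientedIncMatrix_mul_diagonal_mul_transpose, powersetCard_eq_filter,
          powerset_univ, sum_filter]
        refine sum_congr rfl fun F _ => ?_
        by_cases hF : #F = k <;> simp [hF]

/-- (Matrix-forest theorem, Coxeter type `Aₙ`.) Let `σ_{pq}` be the
coordinate-swapping reflections of `ℝ^n`, `c_{pq} ≥ 0` weights, and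
`M = ∑_{p<q} c_{pq}(I - σ_{pq})`. Then the coefficient `μ_k = Tr(M^{∧k})` (the sum of all
principal `k × k` minors of `M`) equals the sum, over all forests `F` on `{1,...,n}` with `k`
edges, of `∏_{edges} c_{pq}` times `∏_i (m_i + 1)` over the `n - k` components (`m_i` = number
of edges of the `i`-th component). In particular `det M = 0`. -/
theorem matrix_forest_A (n k : ℕ) (hn : 1 ≤ n) (hk : k ≤ n)
    (c : Fin n → Fin n → ℝ) (hsym : ∀ p q, c p q = c q p) (hpos : ∀ p q, 0 ≤ c p q)
    (M : Matrix (Fin n) (Fin n) ℝ)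
    (hM : M = ∑ p : Fin n, ∑ q : Fin n, if p < q then
        c p q • ((1 : Matrix (Fin n) (Fin n) ℝ)
          - Matrix.of fun i j => if j = Equiv.swap p q i then (1 : ℝ) else 0)
      else 0) :
    (∑ s : Finset (Fin n), if h : s.card = k then
        (M.submatrix (fun i => (s.orderIsoOfFin h i : Fin n))
          (fun i => (s.orderIsoOfFin h i : Fin n))).det
      else 0)
      = (∑ F : Finset (Sym2 (Fin n)),
          if (∀ e ∈ F, ¬ e.IsDiag) ∧ F.card = k ∧
              (SimpleGraph.fromEdgeSet (↑F : Set (Sym2 (Fin n)))).IsAcyclic then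
            (∏ e ∈ F, Sym2.lift ⟨c, hsym⟩ e) *
              ∏ comp : (SimpleGraph.fromEdgeSet (↑F : Set (Sym2 (Fin n)))).ConnectedComponent,
                (((F.filter fun e => ∀ v ∈ e, v ∈ comp.supp).card + 1 : ℕ) : ℝ)
          else 0)
    ∧ M.det = 0 :=
  matrix_forest_A_general n k hn c hsym M hM
end
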